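/- arXiv:1801.01555 — 12 statements merged into one kernel-verified Lean document; each statement's English description precedes it below -/
import Mathlib

section
/- Let X be a finite poset containing a fence of length l. Then X contains at least ⌊(l−1)/2⌋ distinct merging points. -/
open scoped Classical

namespace ReebPoset

variable {X : Type*}

/-- Two elements of a poset are comparable. -/
def Cmp [PartialOrder X] (a b : X) : Prop := a ≤ b ∨ b ≤ a

/-- A poset path from `x` to `y`: a finite sequence of consecutively comparable elements. -/
structure Path [PartialOrder X] (x y : X) where
  n : ℕ
  pts : Fin (n + 1) → X
  first : pts 0 = x
  last : pts (Fin.last n) = y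
  step : ∀ i : Fin n, Cmp (pts i.castSucc) (pts i.succ)

/-- A poset is connected if any two points are joined by a poset path. -/
def Connected (X : Type*) [PartialOrder X] : Prop := ∀ x y : X, Nonempty (Path x y)

/-- The `f`-length of a poset path. -/
noncomputable def flen [PartialOrder X] (f : X → ℝ) {x y : X} (γ : Path x y) : ℝ :=
  ∑ i : Fin γ.n, |f (γ.pts i.succ) - f (γ.pts i.castSucc)|

/-- The metric induced by the filtration `f` (the Reeb metric). -/
noncomputable def df [PartialOrder X] (f : X → ℝ) (x y : X) : ℝ :=
  sInf {L | ∃ γ : Path x y, L = flen f γ}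

/-- The Gromov product associated to `f`. -/
noncomputable def gf [PartialOrder X] (f : X → ℝ) (x y : X) : ℝ :=
  (f x + f y - df f x y) / 2

/-- The poset hyperbolicity of `(X, f)`. -/
noncomputable def hypf (X : Type*) [PartialOrder X] (f : X → ℝ) : ℝ :=
  sInf {ε : ℝ | 0 ≤ ε ∧ ∀ x y z : X, gf f x z ≥ min (gf f x y) (gf f y z) - ε}

/-- The merge value `m_f(x,y)`: max over poset paths of the min of `f` along the path. -/
noncomputable def mf [PartialOrder X] (f : X → ℝ) (x y : X) : ℝ :=
  sSup {m | ∃ γ : Path x y,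
    m = Finset.univ.inf' Finset.univ_nonempty (fun i : Fin (γ.n + 1) => f (γ.pts i))}

/-- A poset path is a fence if its points are distinct and non-consecutive points
are incomparable. -/
def IsFence [PartialOrder X] {x y : X} (γ : Path x y) : Prop :=
  Function.Injective γ.pts ∧
  ∀ i j : Fin (γ.n + 1), (i : ℕ) + 2 ≤ (j : ℕ) → ¬ Cmp (γ.pts i) (γ.pts j)

/-- The maximal length of a fence in the poset `X`. -/
noncomputable def MF (X : Type*) [PartialOrder X] : ℕ :=
  sSup {n : ℕ | ∃ x y : X, ∃ γ : Path x y, IsFence γ ∧ γ.n = n}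

/-- A merging point: an element covering at least two distinct elements. -/
def Merging [PartialOrder X] (x : X) : Prop := ∃ y z : X, y ≠ z ∧ y ⋖ x ∧ z ⋖ x

/-- A poset is a tree if every down-set is a chain. -/
def IsTreePoset (X : Type*) [PartialOrder X] : Prop :=
  ∀ a b c : X, a ≤ c → b ≤ c → (a ≤ b ∨ b ≤ a)

/-- The covering graph of a poset. -/
def covGraph (X : Type*) [PartialOrder X] : SimpleGraph X :=
  SimpleGraph.fromRel (fun a b => a ⋖ b)

/-- The number of elements covered by `x`. -/
noncomputable def iota [PartialOrder X] [Fintype X] (x : X) : ℕ :=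
  (Finset.univ.filter (fun y => y ⋖ x)).card

/-- The first Betti number of a graph: the minimal number of edges one needs to remove
to obtain a tree. -/
noncomputable def betti (G : SimpleGraph X) : ℕ :=
  sInf {k | ∃ s : Set (Sym2 X), s.ncard = k ∧ (G.deleteEdges s).IsTree}

/-- `x ∼ y` iff some poset path from `x` to `y` is `f`-constant. -/
def constRel [PartialOrder X] (f : X → ℝ) (x y : X) : Prop :=
  ∃ γ : Path x y, ∀ i : Fin (γ.n + 1), f (γ.pts i) = f x

/-- `[x] ≤ [y]` in the Reeb poset iff some poset path from `x` to `y` is `f`-nondecreasing. -/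
def ndRel [PartialOrder X] (f : X → ℝ) (x y : X) : Prop :=
  ∃ γ : Path x y, ∀ i : Fin γ.n, f (γ.pts i.castSucc) ≤ f (γ.pts i.succ)

/-- `x ∼ y` in the Reeb tree construction: some poset path from `x` to `y` has all
`f`-values at least `max (f x) (f y)`. -/
def treeEq [PartialOrder X] (f : X → ℝ) (x y : X) : Prop :=
  ∃ γ : Path x y, ∀ i : Fin (γ.n + 1), max (f x) (f y) ≤ f (γ.pts i)

/-- `[x] ≤ [y]` in the Reeb tree poset: some poset path from `x` to `y` has all
`f`-values at least `f x`. -/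
def treeLe [PartialOrder X] (f : X → ℝ) (x y : X) : Prop :=
  ∃ γ : Path x y, ∀ i : Fin (γ.n + 1), f x ≤ f (γ.pts i)

end ReebPoset

section Aux
open ReebPoset
variable {X : Type*} [PartialOrder X] [Fintype X]

/-- In a finite poset, two incomparable elements below `x` force a merging point
between them and `x`. -/
lemma exists_merging_between {a b x : X} (ha : a < x) (hb : b < x)
    (hab : ¬ Cmp a b) : ∃ m : X, a ≤ m ∧ b ≤ m ∧ m ≤ x ∧ Merging m := by
  classical
  obtain ⟨m, hm, hmin⟩ := Finset.exists_minimal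
    (s := Finset.univ.filter (fun z => a ≤ z ∧ b ≤ z ∧ z ≤ x))
    ⟨x, by simp [ha.le, hb.le]⟩
  simp only [Finset.mem_filter, Finset.mem_univ, true_and] at hm
  obtain ⟨ham, hbm, hmx⟩ := hm
  have ham' : a < m := lt_of_le_of_ne ham (by rintro rfl; exact hab (Or.inr hbm))
  have hbm' : b < m := lt_of_le_of_ne hbm (by rintro rfl; exact hab (Or.inl ham))
  obtain ⟨a', haa', ha'm⟩ := exists_le_covBy_of_lt ham'
  obtain ⟨b', hbb', hb'm⟩ := exists_le_covBy_of_lt hbm'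
  refine ⟨m, ham, hbm, hmx, a', b', ?_, ha'm, hb'm⟩
  rintro rfl
  exact ha'm.lt.not_ge (hmin (by simp [haa', hbb', le_trans ha'm.le hmx]) ha'm.le)

end Aux

open ReebPoset in
/-- a finite poset containing a fence of length `l` has at least
`⌊(l-1)/2⌋` distinct merging points. -/
theorem stmt1 {X : Type*} [PartialOrder X] [Fintype X] {x y : X} (γ : Path x y)
    (hγ : IsFence γ) (l : ℕ) (hl : γ.n = l) :
    ∃ S : Finset X, (l - 1) / 2 ≤ S.card ∧ ∀ m ∈ S, Merging m := by
  classical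
  subst hl
  set l := γ.n with hln
  by_cases hl1 : l = 0
  · exact ⟨∅, by simp [hl1], by simp⟩
  -- the points of the fence as a function on ℕ
  set p : ℕ → X := fun i => γ.pts ⟨min i l, by omega⟩ with hp
  have hpeq : ∀ i (h : i ≤ l), p i = γ.pts ⟨i, by omega⟩ := by
    intro i h; simp [hp, Nat.min_eq_left h]
  have hinj : ∀ i j, i ≤ l → j ≤ l → p i = p j → i = j := by
    intro i j hi hj hij
    rw [hpeq i hi, hpeq j hj] at hij
    have := hγ.1 hij
    simpa [Fin.ext_iff] using this
  have hstep : ∀ i, i < l → Cmp (p i) (p (i + 1)) := by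
    intro i hi
    have := γ.step ⟨i, hi⟩
    rw [hpeq i (by omega), hpeq (i+1) (by omega)]
    convert this using 2 <;> simp [Fin.ext_iff]
  have hnc : ∀ i j, i + 2 ≤ j → j ≤ l → ¬ Cmp (p i) (p j) := by
    intro i j hij hj
    rw [hpeq i (by omega), hpeq j hj]
    exact hγ.2 ⟨i, by omega⟩ ⟨j, by omega⟩ (by simpa using hij)
  -- each step is strictly up or strictly down
  have hstrict : ∀ i, i < l → p i < p (i + 1) ∨ p (i + 1) < p i := by
    intro i hi
    rcases hstep i hi with h | h
    · exact Or.inl (lt_of_le_of_ne h (fun e => by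
        have := hinj i (i+1) (by omega) (by omega) e; omega))
    · exact Or.inr (lt_of_le_of_ne h (fun e => by
        have := hinj (i+1) i (by omega) (by omega) e; omega))
  -- directions alternate
  set U : ℕ → Prop := fun i => p i < p (i + 1) with hU
  have hne : ∀ i, i < l → p i ≠ p (i + 1) := by
    intro i hi e; have := hinj i (i+1) (by omega) (by omega) e; omega
  have halt : ∀ i, i + 1 < l → (U (i + 1) ↔ ¬ U i) := by
    intro i hi
    constructor
    · intro h1 h0
      exact hnc i (i + 2) (by omega) (by omega) (Or.inl (h0.trans h1).le)
    · intro h0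
      rcases hstrict i (by omega) with h | h
      · exact absurd h h0
      · rcases hstrict (i+1) hi with h1 | h1
        · exact h1
        · exact absurd (Or.inr (h1.trans h).le) (hnc i (i + 2) (by omega) (by omega))
  -- parity description of directions
  have hpar : ∀ i, i < l → (U i ↔ (U 0 ↔ Even i)) := by
    intro i
    induction i with
    | zero => intro _; simp
    | succ k ih =>
      intro hk
      rw [halt k hk, ih (by omega)]
      simp only [Nat.even_add_one, Nat.even_iff] at *
      constructor <;> intro h <;> first | omega | (constructor <;> intro h2 <;> omega) | tauto
  -- the index of the k-th local maximum
  by_cases hU0 : U 0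
  case pos =>
    -- maxima at odd indices 2k+1
    have key : ∀ k, ∃ m : X, k < (l - 1) / 2 →
        p (2 * k) ≤ m ∧ p (2 * k + 2) ≤ m ∧ m ≤ p (2 * k + 1) ∧ Merging m := by
      intro k
      by_cases hk : k < (l - 1) / 2
      · have h1 : 2 * k + 2 ≤ l := by omega
        have hup : p (2 * k) < p (2 * k + 1) := by
          have := (hpar (2 * k) (by omega)).mpr (by simp only [hU0, Nat.even_iff, true_iff, iff_true]; omega)
          exact this
        have hdn : p (2 * k + 2) < p (2 * k + 1) := by
          have hnu : ¬ U (2 * k + 1) := by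
            rw [hpar (2 * k + 1) (by omega)]
            simp only [hU0, Nat.even_iff, true_iff, iff_true, false_iff, iff_false, Nat.not_even_iff]
            omega
          rcases hstrict (2 * k + 1) (by omega) with h | h
          · exact absurd h hnu
          · exact h
        obtain ⟨m, hm1, hm2, hm3, hm4⟩ := exists_merging_between hup hdn
          (hnc (2 * k) (2 * k + 2) (by omega) (by omega))
        exact ⟨m, fun _ => ⟨hm1, hm2, hm3, hm4⟩⟩
      · exact ⟨x, fun h => absurd h hk⟩
    choose M hM using key
    refine ⟨(Finset.range ((l - 1) / 2)).image M, ?_, ?_⟩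
    · rw [Finset.card_image_of_injOn, Finset.card_range]
      have key2 : ∀ a b : ℕ, a < (l - 1) / 2 → b < (l - 1) / 2 → a < b → M a ≠ M b := by
        intro a b ha hb hab' e
        obtain ⟨ha1, _, _, _⟩ := hM a ha
        obtain ⟨_, _, hb3, _⟩ := hM b hb
        refine hnc (2 * a) (2 * b + 1) (by omega) (by omega) (Or.inl ?_)
        calc p (2 * a) ≤ M a := ha1
          _ = M b := e
          _ ≤ p (2 * b + 1) := hb3
      intro a ha b hb hab
      simp only [Finset.coe_range, Set.mem_Iio] at ha hb
      rcases lt_trichotomy a b with h | h | h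
      · exact absurd hab (key2 a b ha hb h)
      · exact h
      · exact absurd hab.symm (key2 b a hb ha h)
    · intro m hm
      simp only [Finset.mem_image, Finset.mem_range] at hm
      obtain ⟨k, hk, rfl⟩ := hm
      exact (hM k hk).2.2.2
  case neg =>
    -- maxima at even indices 2k+2
    have key : ∀ k, ∃ m : X, k < (l - 1) / 2 →
        p (2 * k + 1) ≤ m ∧ p (2 * k + 3) ≤ m ∧ m ≤ p (2 * k + 2) ∧ Merging m := by
      intro k
      by_cases hk : k < (l - 1) / 2
      · have h1 : 2 * k + 3 ≤ l := by omega
        have hup : p (2 * k + 1) < p (2 * k + 2) := by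
          have := (hpar (2 * k + 1) (by omega)).mpr
            (iff_of_false hU0 (by simp only [Nat.even_iff]; omega))
          exact this
        have hdn : p (2 * k + 3) < p (2 * k + 2) := by
          have hnu : ¬ U (2 * k + 2) := by
            rw [hpar (2 * k + 2) (by omega)]
            exact fun hiff => hU0 (hiff.mpr ⟨k + 1, by ring⟩)
          rcases hstrict (2 * k + 2) (by omega) with h | h
          · exact absurd h hnu
          · exact h
        obtain ⟨m, hm1, hm2, hm3, hm4⟩ := exists_merging_between hup hdn
          (hnc (2 * k + 1) (2 * k + 3) (by omega) (by omega))
        exact ⟨m, fun _ => ⟨hm1, hm2, hm3, hm4⟩⟩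
      · exact ⟨x, fun h => absurd h hk⟩
    choose M hM using key
    refine ⟨(Finset.range ((l - 1) / 2)).image M, ?_, ?_⟩
    · rw [Finset.card_image_of_injOn, Finset.card_range]
      have key2 : ∀ a b : ℕ, a < (l - 1) / 2 → b < (l - 1) / 2 → a < b → M a ≠ M b := by
        intro a b ha hb hab' e
        obtain ⟨ha1, _, _, _⟩ := hM a ha
        obtain ⟨_, _, hb3, _⟩ := hM b hb
        refine hnc (2 * a + 1) (2 * b + 2) (by omega) (by omega) (Or.inl ?_)
        calc p (2 * a + 1) ≤ M a := ha1
          _ = M b := e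
          _ ≤ p (2 * b + 2) := hb3
      intro a ha b hb hab
      simp only [Finset.coe_range, Set.mem_Iio] at ha hb
      rcases lt_trichotomy a b with h | h | h
      · exact absurd hab (key2 a b ha hb h)
      · exact h
      · exact absurd hab.symm (key2 b a hb ha h)
    · intro m hm
      simp only [Finset.mem_image, Finset.mem_range] at hm
      obtain ⟨k, hk, rfl⟩ := hm
      exact (hM k hk).2.2.2
end

section
/- Let X be a finite poset with a smallest element, and let β be the first Betti number of its covering graph. Then every fence in X has length at most 2β + 2. -/
open scoped Classical

section Aux

open ReebPoset

variable {X : Type*} [PartialOrder X] [Fintype X]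

lemma aux_covGraph_adj {a b : X} : (covGraph X).Adj a b ↔ a ≠ b ∧ (a ⋖ b ∨ b ⋖ a) := by
  rw [covGraph, SimpleGraph.fromRel_adj]

lemma aux_one_le_iota {b x : X} (hb : ∀ y, b ≤ y) (hx : x ≠ b) : 1 ≤ iota x := by
  obtain ⟨c, -, hc⟩ := exists_le_covBy_of_lt ((hb x).lt_of_ne (Ne.symm hx))
  refine Finset.card_pos.2 ⟨c, ?_⟩
  simp [hc]

lemma aux_two_le_iota {x a c : X} (ha : a ⋖ x) (hc : c ⋖ x) (hac : a ≠ c) : 2 ≤ iota x := by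
  have hsub : ({a, c} : Finset X) ⊆ Finset.univ.filter (fun y => y ⋖ x) := by
    intro z hz
    simp only [Finset.mem_insert, Finset.mem_singleton] at hz
    rcases hz with rfl | rfl <;> simp [ha, hc]
  calc 2 = ({a, c} : Finset X).card := (Finset.card_pair hac).symm
    _ ≤ _ := Finset.card_le_card hsub

lemma aux_sum_iota : ∑ x : X, iota x = (covGraph X).edgeFinset.card := by
  have h1 : (Finset.univ.filter (fun q : X × X => q.1 ⋖ q.2)).card = ∑ x : X, iota x := by
    rw [Finset.card_eq_sum_card_fiberwise (f := Prod.snd) (t := Finset.univ)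
      (fun _ _ => Finset.mem_univ _)]
    refine Finset.sum_congr rfl fun x _ => ?_
    refine Finset.card_bij (fun q _ => q.1) ?_ ?_ ?_
    · intro q hq
      simp only [Finset.mem_filter, Finset.mem_univ, true_and] at hq ⊢
      exact hq.2 ▸ hq.1
    · intro q hq q' hq' h
      simp only [Finset.mem_filter] at hq hq'
      exact Prod.ext h (hq.2.trans hq'.2.symm)
    · intro y hy
      simp only [Finset.mem_filter, Finset.mem_univ, true_and] at hy
      exact ⟨(y, x), by simp [hy], rfl⟩
  have h2 : (Finset.univ.filter (fun q : X × X => q.1 ⋖ q.2)).card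
      = (covGraph X).edgeFinset.card := by
    refine Finset.card_bij (fun q _ => s(q.1, q.2)) ?_ ?_ ?_
    · intro q hq
      simp only [Finset.mem_filter, Finset.mem_univ, true_and] at hq
      rw [SimpleGraph.mem_edgeFinset, SimpleGraph.mem_edgeSet, aux_covGraph_adj]
      exact ⟨hq.ne, Or.inl hq⟩
    · intro q hq q' hq' h
      simp only [Finset.mem_filter, Finset.mem_univ, true_and] at hq hq'
      rw [Sym2.eq_iff] at h
      rcases h with ⟨h1, h2⟩ | ⟨h1, h2⟩
      · exact Prod.ext h1 h2
      · exfalso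
        have ha : q.1 < q'.1 := h2 ▸ hq.lt
        have hb : q'.1 < q.1 := h1 ▸ hq'.lt
        exact absurd (ha.trans hb) (lt_irrefl _)
    · intro e he
      induction e using Sym2.ind with
      | _ u v =>
        rw [SimpleGraph.mem_edgeFinset, SimpleGraph.mem_edgeSet, aux_covGraph_adj] at he
        rcases he.2 with h | h
        · exact ⟨(u, v), by simp [h], rfl⟩
        · exact ⟨(v, u), by simp [h], Sym2.eq_swap⟩
  rw [← h1, h2]

lemma aux_iota_bot {b : X} (hb : ∀ y, b ≤ y) : iota b = 0 := by
  rw [iota, Finset.card_eq_zero, Finset.filter_eq_empty_iff]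
  exact fun {y} _ h => absurd (hb y) (h.lt : y < b).not_ge

lemma aux_card_le_sum {b : X} (hb : ∀ y, b ≤ y) (S : Finset X)
    (hS : ∀ x ∈ S, 2 ≤ iota x) :
    S.card + (Fintype.card X - 1) ≤ ∑ x : X, iota x := by
  have hbS : b ∉ S := fun h => by
    have := hS b h
    rw [aux_iota_bot hb] at this
    omega
  have h1 : 2 * S.card ≤ ∑ x ∈ S, iota x := by
    calc 2 * S.card = ∑ _x ∈ S, 2 := by rw [Finset.sum_const, smul_eq_mul, mul_comm]
      _ ≤ _ := Finset.sum_le_sum hS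
  have h2 : Sᶜ.card - 1 ≤ ∑ x ∈ Sᶜ, iota x := by
    have hbc : b ∈ Sᶜ := Finset.mem_compl.2 hbS
    calc Sᶜ.card - 1 = (Sᶜ \ {b}).card := by
          rw [Finset.card_sdiff_of_subset (Finset.singleton_subset_iff.2 hbc), Finset.card_singleton]
      _ = ∑ _x ∈ Sᶜ \ {b}, 1 := by rw [Finset.sum_const, smul_eq_mul, mul_one]
      _ ≤ ∑ x ∈ Sᶜ \ {b}, iota x := Finset.sum_le_sum (fun x hx => by
          rw [Finset.mem_sdiff, Finset.mem_singleton] at hx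
          exact aux_one_le_iota hb hx.2)
      _ ≤ ∑ x ∈ Sᶜ, iota x := Finset.sum_le_sum_of_subset (Finset.sdiff_subset)
  have h3 : ∑ x ∈ S, iota x + ∑ x ∈ Sᶜ, iota x = ∑ x : X, iota x :=
    Finset.sum_add_sum_compl S _
  have h4 : S.card + Sᶜ.card = Fintype.card X := Finset.card_add_card_compl S
  omega

lemma aux_betti_ge {b : X} (hb : ∀ y, b ≤ y) (m : ℕ)
    (hm : m + (Fintype.card X - 1) ≤ (covGraph X).edgeFinset.card) :
    m ≤ betti (covGraph X) := by
  have hpar : ∀ x : X, x ≠ b → ∃ a, a ⋖ x := fun x hx => by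
    obtain ⟨a, -, h⟩ := exists_le_covBy_of_lt ((hb x).lt_of_ne (Ne.symm hx))
    exact ⟨a, h⟩
  set par : X → X := fun x => if h : x = b then b else (hpar x h).choose with hpardef
  have hcov : ∀ x, x ≠ b → par x ⋖ x := by
    intro x hx
    simp only [hpardef, dif_neg hx]
    exact (hpar x hx).choose_spec
  set T : SimpleGraph X := SimpleGraph.fromRel (fun u v => u ≠ b ∧ v = par u) with hT
  have hadjT : ∀ {u v : X}, T.Adj u v ↔ u ≠ v ∧ ((u ≠ b ∧ v = par u) ∨ (v ≠ b ∧ u = par v)) := by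
    intro u v
    rw [hT, SimpleGraph.fromRel_adj]
  have hTle : T ≤ covGraph X := by
    intro u v h
    rw [hadjT] at h
    rw [aux_covGraph_adj]
    rcases h with ⟨hne, ⟨hu, rfl⟩ | ⟨hv, rfl⟩⟩
    · exact ⟨hne, Or.inr (hcov u hu)⟩
    · exact ⟨hne, Or.inl (hcov v hv)⟩
  have hxadj : ∀ x : X, x ≠ b → T.Adj x (par x) := fun x hx =>
    hadjT.2 ⟨(hcov x hx).ne', Or.inl ⟨hx, rfl⟩⟩
  have hreach : ∀ x : X, T.Reachable x b := by
    intro x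
    induction x using WellFoundedLT.induction with
    | ind x IH =>
      by_cases hx : x = b
      · exact hx ▸ SimpleGraph.Reachable.refl x
      · exact ((hxadj x hx).reachable).trans (IH (par x) (hcov x hx).lt)
  have hNE : Nonempty X := ⟨b⟩
  have hconn : T.Connected := by
    refine ⟨fun u v => (hreach u).trans (hreach v).symm⟩
  have hac : T.IsAcyclic := by
    intro v c hc
    obtain ⟨x, hxmem, hxmax⟩ := c.support.toFinset.exists_maximal
      ⟨v, List.mem_toFinset.2 c.start_mem_support⟩
    have hmax' : ∀ z ∈ c.support, ¬ x < z := fun z hz hlt => hlt.not_ge (hxmax (List.mem_toFinset.2 hz) hlt.le)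
    have hx' : x ∈ c.support := List.mem_toFinset.1 hxmem
    have hsup : ∀ z ∈ (c.rotate x hx').support, ¬ x < z := by
      intro z hz
      rcases (SimpleGraph.Walk.mem_support_iff _).1 hz with rfl | hz'
      · exact hmax' _ hx'
      · refine hmax' z (List.mem_of_mem_tail ?_)
        exact (SimpleGraph.Walk.support_rotate c x hx').mem_iff.1 hz'
    have key : ∀ (w : T.Walk x x), w.IsCycle → (∀ z ∈ w.support, ¬ x < z) → False := by
      intro w hcyc hmax
      cases w with
      | nil => exact hcyc.ne_nil rfl
      | @cons _ u _ hadj q =>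
        have hne : x ≠ u := hadj.ne
        have hxb_hu : u = par x ∧ x ≠ b := by
          have h1 : ¬ x < u := hmax u (by
            rw [SimpleGraph.Walk.support_cons]
            exact List.mem_cons_of_mem _ q.start_mem_support)
          rcases hadjT.1 hadj with ⟨-, ⟨hxb, hup⟩ | ⟨hub, hxp⟩⟩
          · exact ⟨hup, hxb⟩
          · exfalso; apply h1; rw [hxp]; exact (hcov u hub).lt
        have hqnil : ¬ q.reverse.Nil := SimpleGraph.Walk.not_nil_of_ne hne
        set z := q.reverse.getVert 1 with hzdef
        have hzadj : T.Adj x z := q.reverse.adj_snd hqnil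
        have hzmem_edge : s(x, z) ∈ q.reverse.edges := by
          rw [← q.reverse.cons_tail_eq hqnil, SimpleGraph.Walk.edges_cons]
          exact List.mem_cons_self
        have hzedge : s(x, z) ∈ q.edges := by
          rwa [SimpleGraph.Walk.edges_reverse, List.mem_reverse] at hzmem_edge
        have hzsup : z ∈ q.support := q.snd_mem_support_of_mem_edges hzedge
        have hz' : z = par x := by
          have h1 : ¬ x < z := hmax z (by
            rw [SimpleGraph.Walk.support_cons]
            exact List.mem_cons_of_mem _ hzsup)
          rcases hadjT.1 hzadj with ⟨-, ⟨hxb, hzp⟩ | ⟨hzb, hxp⟩⟩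
          · exact hzp
          · exfalso; apply h1; rw [hxp]; exact (hcov z hzb).lt
        have hnodup := hcyc.edges_nodup
        rw [SimpleGraph.Walk.edges_cons, List.nodup_cons] at hnodup
        apply hnodup.1
        have heq : s(x, u) = s(x, z) := by rw [hxb_hu.1, hz']
        rw [heq]
        exact hzedge
    exact key _ (hc.rotate hx') hsup
  have hTtree : T.IsTree := ⟨hconn, hac⟩
  set s0 : Set (Sym2 X) := (covGraph X).edgeSet \ T.edgeSet with hs0
  have hdel : (covGraph X).deleteEdges s0 = T := by
    rw [← SimpleGraph.edgeSet_inj, SimpleGraph.edgeSet_deleteEdges, hs0,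
      Set.diff_diff_cancel_left (SimpleGraph.edgeSet_mono hTle)]
  have hne_set : {k | ∃ s : Set (Sym2 X), s.ncard = k ∧
      ((covGraph X).deleteEdges s).IsTree}.Nonempty :=
    ⟨s0.ncard, s0, rfl, hdel ▸ hTtree⟩
  rw [betti]
  refine le_csInf hne_set ?_
  rintro k ⟨s, rfl, htree⟩
  have hcard := htree.card_edgeFinset
  have hsubset : (covGraph X).edgeSet ⊆ ((covGraph X).deleteEdges s).edgeSet ∪ s := by
    intro e he
    by_cases hes : e ∈ s
    · exact Or.inr hes
    · exact Or.inl (by rw [SimpleGraph.edgeSet_deleteEdges]; exact ⟨he, hes⟩)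
  have hn1 : (covGraph X).edgeSet.ncard ≤
      ((covGraph X).deleteEdges s).edgeSet.ncard + s.ncard :=
    le_trans (Set.ncard_le_ncard hsubset ((Set.toFinite _).union (Set.toFinite _)))
      (Set.ncard_union_le _ _)
  have e1 : (covGraph X).edgeSet.ncard = (covGraph X).edgeFinset.card := by
    rw [SimpleGraph.edgeFinset, Set.ncard_eq_toFinset_card']
  have e2 : ((covGraph X).deleteEdges s).edgeSet.ncard
      = ((covGraph X).deleteEdges s).edgeFinset.card := by
    rw [SimpleGraph.edgeFinset, Set.ncard_eq_toFinset_card']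
  rw [e1, e2] at hn1
  omega

end Aux
open ReebPoset in
/-- in a finite poset with a smallest element, every fence has length at
most `2β + 2`, where `β` is the first Betti number of the covering graph. -/
theorem stmt3 {X : Type*} [PartialOrder X] [Fintype X]
    (h0 : ∃ b : X, ∀ x : X, b ≤ x) {x y : X} (γ : Path x y) (hγ : IsFence γ) :
    γ.n ≤ 2 * betti (covGraph X) + 2 := by
  classical
  obtain ⟨b, hb⟩ := h0
  by_cases hn2 : γ.n ≤ 2
  · omega
  push_neg at hn2
  set n := γ.n with hn
  set m := (n - 1) / 2 with hm
  have hlt : ∀ k : ℕ, min k n < n + 1 := fun k => Nat.lt_succ_of_le (min_le_right _ _)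
  set p : ℕ → X := fun k => γ.pts ⟨min k n, hlt k⟩ with hp
  have hpts : ∀ (k : ℕ) (hk : k ≤ n), p k = γ.pts ⟨k, by omega⟩ := by
    intro k hk
    simp only [hp]
    congr 1
    ext
    simp only []
    omega
  have pfence : ∀ {k l : ℕ}, k + 2 ≤ l → l ≤ n → ¬ Cmp (p k) (p l) := by
    intro k l hkl hl hc
    rw [hpts k (by omega), hpts l hl] at hc
    exact hγ.2 ⟨k, by omega⟩ ⟨l, by omega⟩ (by simpa using hkl) hc
  have pinj : ∀ {k l : ℕ}, k ≤ n → l ≤ n → p k = p l → k = l := by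
    intro k l hk hl h
    rw [hpts k hk, hpts l hl] at h
    simpa using congrArg Fin.val (hγ.1 h)
  have pstep : ∀ k : ℕ, k < n → Cmp (p k) (p (k+1)) := by
    intro k hk
    have h := γ.step ⟨k, hk⟩
    have e1 : γ.pts ((⟨k, hk⟩ : Fin n).castSucc) = p k := by
      rw [hpts k (by omega)]
      congr 1
    have e2 : γ.pts ((⟨k, hk⟩ : Fin n).succ) = p (k+1) := by
      rw [hpts (k+1) (by omega)]
      congr 1
    rwa [e1, e2] at h
  have sstep : ∀ k : ℕ, k < n → p k < p (k+1) ∨ p (k+1) < p k := by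
    intro k hk
    have hne : p k ≠ p (k+1) := fun h => by have := pinj (by omega) (by omega) h; omega
    rcases pstep k hk with h | h
    · exact Or.inl (h.lt_of_ne hne)
    · exact Or.inr (h.lt_of_ne hne.symm)
  have peak : ∀ j : ℕ, 2*j+3 ≤ n →
      ∃ k, 2*j ≤ k ∧ k ≤ 2*j+1 ∧ p k < p (k+1) ∧ p (k+2) < p (k+1) := by
    intro j hj
    rcases sstep (2*j+1) (by omega) with h1 | h1
    · rcases sstep (2*j+2) (by omega) with h2 | h2
      · exact absurd (Or.inl (h1.le.trans h2.le))
          (pfence (k := 2*j+1) (l := 2*j+3) (by omega) (by omega))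
      · exact ⟨2*j+1, by omega, le_rfl, h1, by
          have : 2*j+1+2 = 2*j+3 := by omega
          rw [this]
          have : 2*j+1+1 = 2*j+2 := by omega
          rw [this]
          exact h2⟩
    · rcases sstep (2*j) (by omega) with h2 | h2
      · exact ⟨2*j, le_rfl, by omega, h2, by
          have : 2*j+2 = 2*j+1+1 := by omega
          rw [this]
          exact h1⟩
      · exact absurd (Or.inr (h1.le.trans h2.le))
          (pfence (k := 2*j) (l := 2*j+2) (by omega) (by omega))
  have merge : ∀ k : ℕ, k + 2 ≤ n → p k < p (k+1) → p (k+2) < p (k+1) →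
      ∃ yy : X, p k ≤ yy ∧ yy ≤ p (k+1) ∧ 2 ≤ iota yy := by
    intro k hk h1 h2
    set Tk := Finset.univ.filter
      (fun z : X => p k ≤ z ∧ p (k+2) ≤ z ∧ z ≤ p (k+1)) with hTk
    have hTne : Tk.Nonempty := ⟨p (k+1), by simp [hTk, h1.le, h2.le]⟩
    obtain ⟨yy, hymem, hymin⟩ := Tk.exists_minimal hTne
    have hymem' := hymem
    rw [hTk, Finset.mem_filter] at hymem'
    obtain ⟨-, hy1, hy2, hy3⟩ := hymem'
    have hlt1 : p k < yy := by
      refine hy1.lt_of_ne fun h => ?_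
      exact pfence (k := k) (l := k+2) (by omega) (by omega) (Or.inr (h.symm ▸ hy2))
    have hlt2 : p (k+2) < yy := by
      refine hy2.lt_of_ne fun h => ?_
      exact pfence (k := k) (l := k+2) (by omega) (by omega) (Or.inl (h.symm ▸ hy1))
    obtain ⟨a, ha1, ha2⟩ := exists_le_covBy_of_lt hlt1
    obtain ⟨c, hc1, hc2⟩ := exists_le_covBy_of_lt hlt2
    have hac : a ≠ c := by
      rintro rfl
      refine ha2.lt.not_ge (hymin (show a ∈ Tk from ?_) ha2.lt.le)
      rw [hTk, Finset.mem_filter]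
      exact ⟨Finset.mem_univ _, ha1, hc1, ha2.lt.le.trans hy3⟩
    exact ⟨yy, hy1, hy3, aux_two_le_iota ha2 hc2 hac⟩
  have hchoice : ∀ j : Fin m, ∃ ky : ℕ × X,
      (2*(j:ℕ) ≤ ky.1 ∧ ky.1 ≤ 2*(j:ℕ)+1) ∧ p ky.1 ≤ ky.2 ∧ ky.2 ≤ p (ky.1+1) ∧
      2 ≤ iota ky.2 := by
    intro j
    have hj : 2*(j:ℕ)+3 ≤ n := by have := j.2; omega
    obtain ⟨k, hk1, hk2, h1, h2⟩ := peak j hj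
    obtain ⟨yy, hy1, hy3, hy4⟩ := merge k (by omega) h1 h2
    exact ⟨(k, yy), ⟨hk1, hk2⟩, hy1, hy3, hy4⟩
  choose ky hky1 hky2 hky3 hky4 using hchoice
  set S : Finset X := Finset.univ.filter (fun z => 2 ≤ iota z) with hS
  have hkey : ∀ i j : Fin m, (i:ℕ) < (j:ℕ) → (ky i).2 = (ky j).2 → False := by
    intro i j hij heq
    have h1 : p ((ky i).1) ≤ p ((ky j).1 + 1) :=
      le_trans (hky2 i) (heq ▸ hky3 j)
    refine pfence (k := (ky i).1) (l := (ky j).1 + 1) ?_ ?_ (Or.inl h1)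
    · have hi := (hky1 i).2
      have hj := (hky1 j).1
      omega
    · have hj := (hky1 j).2
      have hj2 := j.2
      omega
  have hmS : m ≤ S.card := by
    calc m = (Finset.univ : Finset (Fin m)).card := by simp
      _ ≤ S.card := by
          refine Finset.card_le_card_of_injOn (fun j => (ky j).2)
            (fun j _ => by simp [hS, hky4 j]) ?_
          intro i _ j _ h
          by_contra hne
          rcases Nat.lt_or_ge (i:ℕ) (j:ℕ) with hlt | hge
          · exact hkey i j hlt h
          · have : (j:ℕ) < (i:ℕ) := lt_of_le_of_ne hge
              (fun hy => hne (Fin.ext hy.symm))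
            exact hkey j i this h.symm
  have hsum : m + (Fintype.card X - 1) ≤ ∑ z : X, iota z := by
    have := aux_card_le_sum hb S (fun z hz => by
      rw [hS, Finset.mem_filter] at hz
      exact hz.2)
    omega
  rw [aux_sum_iota] at hsum
  have hfinal := aux_betti_ge hb m hsum
  omega
end

section
/- Let T be a finite connected poset with a minimal element 0. Then T is a tree if and only if every fence in T has length at most two, and every fence of length two has the form x > y < z (i.e., there is no fence x < y > z). -/
open scoped Classical

/-!
In a tree, a path `a — b — c` with `a`, `c` incomparable must dip at `b`: if `b` were above
`a` or `c`, the down-set of `b` (or transitivity) would make `a` and `c` comparable. So every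
interior point of a fence is a strict local minimum, which rules out fences of length three
(the middle two points would each be below the other). Conversely, two incomparable elements
below a common `c` form the fence `a < c > b`.
-/

namespace ReebPoset

variable {X : Type*} [PartialOrder X]

theorem IsTreePoset.lt_and_lt_of_not_cmp (hT : IsTreePoset X) {a b c : X}
    (hab : Cmp a b) (hbc : Cmp b c) (hac : ¬ Cmp a c) : b < a ∧ b < c := by
  have hba : b ≤ a := by
    rcases hab with hab | hab
    · rcases hbc with hbc | hbc
      · exact absurd (Or.inl (hab.trans hbc)) hac
      · exact absurd (hT a c b hab hbc) hac
    · exact hab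
  have hbc' : b ≤ c := hbc.resolve_right fun hcb => hac (Or.inr (hcb.trans hba))
  refine ⟨hba.lt_of_ne ?_, hbc'.lt_of_ne ?_⟩ <;> rintro rfl
  exacts [hac hbc, hac hab]

theorem IsFence.lt_and_lt_of_isTreePoset (hT : IsTreePoset X) {x y : X} {γ : Path x y}
    (hF : IsFence γ) (k : ℕ) (hk : k + 2 ≤ γ.n) :
    γ.pts ⟨k + 1, by omega⟩ < γ.pts ⟨k, by omega⟩ ∧
      γ.pts ⟨k + 1, by omega⟩ < γ.pts ⟨k + 2, by omega⟩ :=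
  hT.lt_and_lt_of_not_cmp (γ.step ⟨k, by omega⟩) (γ.step ⟨k + 1, by omega⟩)
    (hF.2 ⟨k, by omega⟩ ⟨k + 2, by omega⟩ le_rfl)

theorem IsFence.n_le_two_of_isTreePoset (hT : IsTreePoset X) {x y : X} {γ : Path x y}
    (hF : IsFence γ) : γ.n ≤ 2 := by
  by_contra! h
  exact lt_asymm (hF.lt_and_lt_of_isTreePoset hT 0 (by omega)).2
    (hF.lt_and_lt_of_isTreePoset hT 1 h).1

def Path.ofCmp₃ {a b c : X} (hab : Cmp a b) (hbc : Cmp b c) : Path a c where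
  n := 2
  pts := ![a, b, c]
  first := rfl
  last := rfl
  step i := by fin_cases i; exacts [hab, hbc]

theorem Path.isFence_ofCmp₃ {a b c : X} (hab : Cmp a b) (hbc : Cmp b c) (hac : ¬ Cmp a c) :
    IsFence (Path.ofCmp₃ hab hbc) := by
  have hab' : a ≠ b := by rintro rfl; exact hac hbc
  have hbc' : b ≠ c := by rintro rfl; exact hac hab
  have hac' : a ≠ c := by rintro rfl; exact hac (Or.inl le_rfl)
  refine ⟨fun i j hij => ?_, fun i j hij => ?_⟩
  · fin_cases i <;> fin_cases j <;> simp_all [Path.ofCmp₃, eq_comm]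
  · fin_cases i <;> fin_cases j <;> simp_all [Path.ofCmp₃]

end ReebPoset

open ReebPoset in
theorem stmt6_general {X : Type*} [PartialOrder X] :
    IsTreePoset X ↔
      ∀ (x y : X) (γ : Path x y), IsFence γ →
        γ.n ≤ 2 ∧ (γ.n = 2 → γ.pts 1 < γ.pts 0 ∧ γ.pts 1 < γ.pts 2) := by
  constructor
  · intro hT x y γ hF
    refine ⟨hF.n_le_two_of_isTreePoset hT, fun hn => ?_⟩
    obtain ⟨n, pts, _, _, _⟩ := γ
    subst hn
    exact hF.lt_and_lt_of_isTreePoset hT 0 le_rfl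
  · intro h a b c hac hbc
    by_contra hab
    have hca : c < a := ((h a b _ (Path.isFence_ofCmp₃ (Or.inl hac) (Or.inr hbc) hab)).2 rfl).1
    exact hca.not_ge hac

open ReebPoset in
/-- a finite connected poset with a smallest element is a tree iff every
fence has length at most two, and every fence of length two has the form `x > y < z`. -/
theorem stmt6 {X : Type*} [PartialOrder X] [Fintype X]
    (hc : Connected X) (h0 : ∃ b : X, ∀ x : X, b ≤ x) :
    IsTreePoset X ↔
      ∀ (x y : X) (γ : Path x y), IsFence γ →
        γ.n ≤ 2 ∧ (γ.n = 2 → γ.pts 1 < γ.pts 0 ∧ γ.pts 1 < γ.pts 2) :=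
  stmt6_general
end

section
/- Let T be a finite connected poset with a minimal element. Then T is a tree (as a poset) if and only if its covering graph is a tree (acyclic connected graph). -/
open scoped Classical

namespace Stmt7Aux
open ReebPoset SimpleGraph

variable {X : Type*} [PartialOrder X] [Fintype X]

set_option linter.unusedSectionVars false

lemma covAdj {a b : X} (h : a ⋖ b) : (covGraph X).Adj a b :=
  (SimpleGraph.fromRel_adj _ _ _).2 ⟨h.ne, Or.inl h⟩

lemma covAdj_iff {a b : X} : (covGraph X).Adj a b ↔ a ≠ b ∧ (a ⋖ b ∨ b ⋖ a) :=
  SimpleGraph.fromRel_adj _ _ _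

lemma exists_covby_between {x y : X} (h : x < y) : ∃ u, x ≤ u ∧ u ⋖ y := by
  obtain ⟨u, hu, hmax⟩ := Set.Finite.exists_maximalFor id {u : X | x ≤ u ∧ u < y}
    (Set.toFinite _) ⟨x, le_refl x, h⟩
  refine ⟨u, hu.1, hu.2, fun w hw1 hw2 => ?_⟩
  exact absurd (le_antisymm hw1.le (hmax ⟨hu.1.trans hw1.le, hw2⟩ hw1.le)) hw1.ne

lemma exists_walk_le : ∀ y x : X, x ≤ y →
    ∃ w : (covGraph X).Walk x y, ∀ v ∈ w.support, v ≤ y := by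
  intro y
  induction y using WellFoundedLT.induction with
  | _ y ih =>
    intro x hxy
    rcases eq_or_lt_of_le hxy with rfl | hlt
    · exact ⟨.nil, by simp⟩
    · obtain ⟨u, hxu, huy⟩ := exists_covby_between hlt
      obtain ⟨w, hw⟩ := ih u huy.lt x hxu
      refine ⟨w.concat (covAdj huy), ?_⟩
      intro v hv
      rw [Walk.support_concat, List.mem_append] at hv
      rcases hv with hv | hv
      · exact (hw v hv).trans huy.le
      · simp at hv; exact hv.le


lemma cov_connected (h0 : ∃ b : X, ∀ x : X, b ≤ x) : (covGraph X).Connected := by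
  obtain ⟨b, hb⟩ := h0
  haveI : Nonempty X := ⟨b⟩
  refine ⟨fun x y => ?_⟩
  obtain ⟨w1, -⟩ := exists_walk_le x b (hb x)
  obtain ⟨w2, -⟩ := exists_walk_le y b (hb y)
  exact ⟨w1.reverse.append w2⟩


lemma concat_isPath {u v w : X} {p : (covGraph X).Walk u v} (h : (covGraph X).Adj v w)
    (hp : p.IsPath) (hw : w ∉ p.support) : (p.concat h).IsPath := by
  rw [← Walk.isPath_reverse_iff, Walk.reverse_concat]
  exact hp.reverse.cons (by simpa using hw)

lemma cov_acyclic (ht : IsTreePoset X) : (covGraph X).IsAcyclic := by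
  intro v c hc
  obtain ⟨m, hmS, hmax⟩ := Set.Finite.exists_maximalFor id {v : X | v ∈ c.support}
    (Set.toFinite _) ⟨v, by simp⟩
  have hmem : ∀ x : X, x ∈ (c.rotate m hmS).support → x ∈ c.support := by
    intro x hx
    rw [Walk.support_eq_cons] at hx
    rcases List.mem_cons.1 hx with h | h
    · rw [h]; exact hmS
    · exact List.tail_subset _ ((Walk.support_rotate c m hmS).mem_iff.1 h)
  set c' := c.rotate m hmS with hc'def
  have hcyc : c'.IsCycle := hc.rotate hmS
  obtain ⟨u, h, p, hcc⟩ := Walk.not_nil_iff.1 hcyc.not_nil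
  rw [hcc] at hcyc
  have hpath := (Walk.cons_isCycle_iff p h).1 hcyc
  have hune : ¬ p.Nil := by
    have h3 := hcyc.three_le_length
    rw [Walk.length_cons] at h3
    intro hn
    rw [Walk.nil_iff_length_eq] at hn
    omega
  have hrne : ¬ p.reverse.Nil := by
    intro hn
    rw [Walk.nil_iff_length_eq, Walk.length_reverse, ← Walk.nil_iff_length_eq] at hn
    exact hune hn
  obtain ⟨w, hwdef⟩ : ∃ w, w = p.reverse.getVert 1 := ⟨_, rfl⟩
  have hadjw : (covGraph X).Adj m w := hwdef ▸ p.reverse.adj_snd hrne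
  have hwsup : w ∈ p.reverse.support := by
    rw [hwdef, ← Walk.cons_support_tail hrne]
    exact List.mem_cons_of_mem _ p.reverse.tail.start_mem_support
  have hwedge : s(m, w) ∈ p.edges := by
    have h2 : s(m, p.reverse.getVert 1) ∈
        (Walk.cons (p.reverse.adj_snd hrne) p.reverse.tail).edges := by
      rw [Walk.edges_cons]; exact List.mem_cons_self
    rw [Walk.cons_tail_eq p.reverse hrne] at h2
    have h1 : s(m, w) ∈ p.reverse.edges := hwdef ▸ h2
    rw [Walk.edges_reverse, List.mem_reverse] at h1
    exact h1
  have huw : u ≠ w := fun h' => hpath.2 (h' ▸ hwedge)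
  have humem : u ∈ c.support := by
    apply hmem; rw [hcc, Walk.support_cons]
    exact List.mem_cons_of_mem _ p.start_mem_support
  have hwmem : w ∈ c.support := by
    apply hmem; rw [hcc, Walk.support_cons]
    refine List.mem_cons_of_mem _ ?_
    rw [Walk.support_reverse, List.mem_reverse] at hwsup
    exact hwsup
  have hcovu : u ⋖ m := by
    rcases (covAdj_iff.1 h).2 with h' | h'
    · exact absurd (le_antisymm h'.lt.le (hmax humem h'.lt.le)) h'.lt.ne
    · exact h'
  have hcovw : w ⋖ m := by
    rcases (covAdj_iff.1 hadjw).2 with h' | h'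
    · exact absurd (le_antisymm h'.lt.le (hmax hwmem h'.lt.le)) h'.lt.ne
    · exact h'
  rcases ht u w m hcovu.le hcovw.le with h' | h'
  · exact hcovu.2 (h'.lt_of_ne huw) hcovw.lt
  · exact hcovw.2 (h'.lt_of_ne huw.symm) hcovu.lt


lemma exists_merging_aux : ∀ c a b : X, a ≤ c → b ≤ c → ¬(a ≤ b ∨ b ≤ a) →
    ∃ (c' y z : X), y ≠ z ∧ y ⋖ c' ∧ z ⋖ c' := by
  intro c
  induction c using WellFoundedLT.induction with
  | _ c ih =>
    intro a b hac hbc hab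
    have hac' : a < c := lt_of_le_of_ne hac (by rintro rfl; exact hab (Or.inr hbc))
    have hbc' : b < c := lt_of_le_of_ne hbc (by rintro rfl; exact hab (Or.inl hac))
    obtain ⟨a', haa', ha'c⟩ := exists_covby_between hac'
    obtain ⟨b', hbb', hb'c⟩ := exists_covby_between hbc'
    by_cases h : a' = b'
    · exact ih a' ha'c.lt a b haa' (h ▸ hbb') hab
    · exact ⟨c, a', b', h, ha'c, hb'c⟩

lemma tree_of_covTree (h0 : ∃ b : X, ∀ x : X, b ≤ x) (htree : (covGraph X).IsTree) :
    IsTreePoset X := by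
  by_contra hnt
  simp only [IsTreePoset, not_forall] at hnt
  obtain ⟨a, b, c, hac, hbc, hab⟩ := hnt
  obtain ⟨c, y, z, hyz, hy, hz⟩ := exists_merging_aux c a b hac hbc hab
  obtain ⟨b0, hb0⟩ := h0
  obtain ⟨w1, hw1⟩ := exists_walk_le y b0 (hb0 y)
  obtain ⟨w2, hw2⟩ := exists_walk_le z b0 (hb0 z)
  have hns1 : c ∉ w1.bypass.support := fun hcs =>
    absurd (hw1 c (w1.support_bypass_subset hcs)) (not_le_of_gt hy.lt)
  have hns2 : c ∉ w2.bypass.support := fun hcs =>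
    absurd (hw2 c (w2.support_bypass_subset hcs)) (not_le_of_gt hz.lt)
  have hp1 : (w1.bypass.concat (covAdj hy)).IsPath := concat_isPath _ w1.bypass_isPath hns1
  have hp2 : (w2.bypass.concat (covAdj hz)).IsPath := concat_isPath _ w2.bypass_isPath hns2
  have heq := (htree.existsUnique_path b0 c).unique hp1 hp2
  obtain ⟨hv, -⟩ := Walk.concat_inj heq
  exact hyz hv


end Stmt7Aux

open ReebPoset in
/-- a finite connected poset with a smallest element is a tree poset iff
its covering graph is a tree (connected and acyclic). -/
theorem stmt7 {X : Type*} [PartialOrder X] [Fintype X]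
    (hc : Connected X) (h0 : ∃ b : X, ∀ x : X, b ≤ x) :
    IsTreePoset X ↔ (covGraph X).IsTree := by
  constructor
  · intro ht
    exact ⟨Stmt7Aux.cov_connected h0, Stmt7Aux.cov_acyclic ht⟩
  · intro htree
    exact Stmt7Aux.tree_of_covTree h0 htree
end

section
/- Let X be a finite connected poset and f : X → ℝ order preserving. Define x ∼ y iff there is a poset path from x to y along which f is constant. Then ∼ is an equivalence relation, and the relation on the quotient R_f(X) given by [x] ≤ [y] iff there is an f-nondecreasing poset path from x to y is a well-defined partial order. -/
open scoped Classical

/-!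
Both relations are reflexive-transitive closures: `∼` of "comparable with equal `f`-values"
and `≤` of "comparable with `f` nondecreasing". Reflexivity and transitivity are therefore
automatic, `∼` is symmetric because its generating relation is, and `∼ ⊆ ≤` gives
well-definedness on classes. For antisymmetry, `f` is monotone along a nondecreasing path,
so paths both ways force `f x = f y`, and then every step of the path from `x` to `y`
is squeezed between `f x` and `f y`, hence `f`-constant.
-/

section MonotoneChains

open Relation

variable {α β : Type*} [PartialOrder β] {s : α → α → Prop} {f : α → β} {x y : α}

lemma Relation.ReflTransGen.le_of_and_le
    (h : ReflTransGen (fun a b => s a b ∧ f a ≤ f b) x y) : f x ≤ f y := by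
  induction h with
  | refl => exact le_rfl
  | tail _ hbc ih => exact ih.trans hbc.2

lemma Relation.ReflTransGen.and_eq_of_and_le
    (h : ReflTransGen (fun a b => s a b ∧ f a ≤ f b) x y) (hyx : f y ≤ f x) :
    ReflTransGen (fun a b => s a b ∧ f a = f b) x y := by
  induction h with
  | refl => exact .refl
  | @tail b c hxb hbc ih =>
    have hcb : f c ≤ f b := hyx.trans hxb.le_of_and_le
    exact (ih (hbc.2.trans hyx)).tail ⟨hbc.1, le_antisymm hbc.2 hcb⟩

end MonotoneChains

namespace ReebPoset

open Relation

variable {X : Type*} [PartialOrder X]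

def Path.nil (x : X) : Path x x where
  n := 0
  pts := fun _ => x
  first := rfl
  last := rfl
  step := fun i => i.elim0

def Path.snoc {x y z : X} (γ : Path x y) (h : Cmp y z) : Path x z where
  n := γ.n + 1
  pts := Fin.snoc γ.pts z
  first := by rw [← Fin.castSucc_zero, Fin.snoc_castSucc, γ.first]
  last := Fin.snoc_last _ _
  step := Fin.lastCases (by simpa [γ.last] using h) fun j => by
    simp only [Fin.succ_castSucc, Fin.snoc_castSucc]
    exact γ.step j

lemma exists_path_iff_reflTransGen (r : X → X → Prop) (x y : X) :
    (∃ γ : Path x y, ∀ i : Fin γ.n, r (γ.pts i.castSucc) (γ.pts i.succ)) ↔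
      ReflTransGen (fun a b => Cmp a b ∧ r a b) x y := by
  constructor
  · rintro ⟨γ, hγ⟩
    have reach : ∀ k, ReflTransGen (fun a b => Cmp a b ∧ r a b) x (γ.pts k) :=
      Fin.induction (by rw [γ.first]) fun i ih => ih.tail ⟨γ.step i, hγ i⟩
    simpa [γ.last] using reach (Fin.last γ.n)
  · intro h
    induction h with
    | refl => exact ⟨Path.nil x, fun i => i.elim0⟩
    | tail _ hbc ih =>
      obtain ⟨γ, hγ⟩ := ih
      refine ⟨γ.snoc hbc.1, Fin.lastCases ?_ fun j => ?_⟩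
      · simpa [Path.snoc, γ.last] using hbc.2
      · simp only [Path.snoc, Fin.succ_castSucc, Fin.snoc_castSucc]
        exact hγ j

lemma constRel_iff_reflTransGen (f : X → ℝ) (x y : X) :
    constRel f x y ↔ ReflTransGen (fun a b => Cmp a b ∧ f a = f b) x y := by
  rw [← exists_path_iff_reflTransGen]
  constructor
  · rintro ⟨γ, hγ⟩
    exact ⟨γ, fun i => (hγ i.castSucc).trans (hγ i.succ).symm⟩
  · rintro ⟨γ, hγ⟩
    exact ⟨γ, Fin.induction (by rw [γ.first]) fun j ih => (hγ j).symm.trans ih⟩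

lemma ndRel_iff_reflTransGen (f : X → ℝ) (x y : X) :
    ndRel f x y ↔ ReflTransGen (fun a b => Cmp a b ∧ f a ≤ f b) x y :=
  exists_path_iff_reflTransGen (fun a b => f a ≤ f b) x y

lemma constRel_equivalence (f : X → ℝ) : Equivalence (constRel f) := by
  have hgen : constRel f = ReflTransGen (fun a b : X => Cmp a b ∧ f a = f b) := by
    ext x y
    exact constRel_iff_reflTransGen f x y
  rw [hgen]
  refine ⟨fun _ => .refl, fun h => ?_, ReflTransGen.trans⟩
  exact ReflTransGen.mono (fun _ _ hab => ⟨hab.1.symm, hab.2.symm⟩) _ _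
    (ReflTransGen.swap _ _ h)

lemma ndRel_refl (f : X → ℝ) (x : X) : ndRel f x x :=
  (ndRel_iff_reflTransGen f x x).2 .refl

lemma ndRel_trans {f : X → ℝ} {x y z : X} (hxy : ndRel f x y) (hyz : ndRel f y z) :
    ndRel f x z := by
  rw [ndRel_iff_reflTransGen] at hxy hyz ⊢
  exact hxy.trans hyz

lemma ndRel_of_constRel {f : X → ℝ} {x y : X} (h : constRel f x y) : ndRel f x y := by
  rw [constRel_iff_reflTransGen] at h
  rw [ndRel_iff_reflTransGen]
  exact ReflTransGen.mono (fun _ _ hab => ⟨hab.1, hab.2.le⟩) _ _ h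

lemma ndRel_congr {f : X → ℝ} {x x' y y' : X} (hx : constRel f x x') (hy : constRel f y y') :
    ndRel f x y ↔ ndRel f x' y' := by
  have hx' := (constRel_equivalence f).symm hx
  have hy' := (constRel_equivalence f).symm hy
  constructor
  · exact fun h => ndRel_trans (ndRel_of_constRel hx') (ndRel_trans h (ndRel_of_constRel hy))
  · exact fun h => ndRel_trans (ndRel_of_constRel hx) (ndRel_trans h (ndRel_of_constRel hy'))

lemma constRel_of_ndRel_of_ndRel {f : X → ℝ} {x y : X} (hxy : ndRel f x y) (hyx : ndRel f y x) :
    constRel f x y := by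
  rw [ndRel_iff_reflTransGen] at hxy hyx
  rw [constRel_iff_reflTransGen]
  exact hxy.and_eq_of_and_le hyx.le_of_and_le

end ReebPoset

open ReebPoset in
theorem stmt8_general {X : Type*} [PartialOrder X]
    (f : X → ℝ) :
    Equivalence (constRel f) ∧
    (∀ x x' y y' : X, constRel f x x' → constRel f y y' →
      (ndRel f x y ↔ ndRel f x' y')) ∧
    (∀ x : X, ndRel f x x) ∧
    (∀ x y z : X, ndRel f x y → ndRel f y z → ndRel f x z) ∧
    (∀ x y : X, ndRel f x y → ndRel f y x → constRel f x y) :=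
  ⟨constRel_equivalence f, fun _ _ _ _ => ndRel_congr, ndRel_refl f,
    fun _ _ _ => ndRel_trans, fun _ _ => constRel_of_ndRel_of_ndRel⟩

open ReebPoset in
/-- `∼` (existence of an `f`-constant poset path) is an equivalence
relation, and `[x] ≤ [y]` (existence of an `f`-nondecreasing poset path) is a
well-defined partial order on the quotient. -/
theorem stmt8 {X : Type*} [PartialOrder X] [Fintype X]
    (hc : Connected X) (f : X → ℝ) (hm : Monotone f) :
    Equivalence (constRel f) ∧
    (∀ x x' y y' : X, constRel f x x' → constRel f y y' →
      (ndRel f x y ↔ ndRel f x' y')) ∧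
    (∀ x : X, ndRel f x x) ∧
    (∀ x y z : X, ndRel f x y → ndRel f y z → ndRel f x z) ∧
    (∀ x y : X, ndRel f x y → ndRel f y x → constRel f x y) :=
  stmt8_general f
end

section
/- Let X be a finite connected poset and f : X → ℝ order preserving. Then the induced map f : R_f(X) → ℝ on the Reeb poset is strictly order preserving: if [x] < [y] then f(x) < f(y). -/
/-!
Along an `f`-nondecreasing poset path, `f` takes values between `f x` and `f y`. Hence
`[x] ≤ [y]` gives `f x ≤ f y`, and if equality held the path itself would be `f`-constant,
i.e. `x ∼ y`.
-/

open scoped Classical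

namespace ReebPoset

variable {X : Type*} [PartialOrder X] {f : X → ℝ} {x y : X}

theorem Path.mem_Icc_of_le_succ (γ : Path x y)
    (hγ : ∀ i : Fin γ.n, f (γ.pts i.castSucc) ≤ f (γ.pts i.succ)) (i : Fin (γ.n + 1)) :
    f (γ.pts i) ∈ Set.Icc (f x) (f y) := by
  have hmono : Monotone (f ∘ γ.pts) := Fin.monotone_iff_le_succ.2 hγ
  constructor
  · simpa only [Function.comp_apply, γ.first] using hmono (Fin.zero_le i)
  · simpa only [Function.comp_apply, γ.last] using hmono (Fin.le_last i)

theorem ndRel.le (h : ndRel f x y) : f x ≤ f y := by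
  obtain ⟨γ, hγ⟩ := h
  simpa only [γ.first] using (γ.mem_Icc_of_le_succ hγ 0).2

theorem ndRel.constRel_of_eq (h : ndRel f x y) (hxy : f x = f y) : constRel f x y := by
  obtain ⟨γ, hγ⟩ := h
  refine ⟨γ, fun i => ?_⟩
  obtain ⟨hxi, hiy⟩ := γ.mem_Icc_of_le_succ hγ i
  exact le_antisymm (hxy ▸ hiy) hxi

end ReebPoset

open ReebPoset in
theorem stmt9_general {X : Type*} [PartialOrder X]
    (f : X → ℝ) :
    ∀ x y : X, ndRel f x y → ¬ constRel f x y → f x < f y :=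
  fun _ _ h hne => h.le.lt_of_ne fun hxy => hne (h.constRel_of_eq hxy)

open ReebPoset in
/-- the induced map on the Reeb poset is strictly order preserving:
`[x] < [y]` implies `f x < f y`. -/
theorem stmt9 {X : Type*} [PartialOrder X] [Fintype X]
    (hc : Connected X) (f : X → ℝ) (hm : Monotone f) :
    ∀ x y : X, ndRel f x y → ¬ constRel f x y → f x < f y :=
  stmt9_general f
end

section
/- Let (T, f) be a Reeb tree poset, i.e., a finite connected tree poset T with a strictly order preserving f : T → ℝ. Then the Reeb tree construction applied to (T, f) recovers T: T_f(T) = T, i.e., the quotient map T → T_f(T) is an order isomorphism. -/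
open scoped Classical

section Aux
open ReebPoset
variable {X : Type*} [PartialOrder X]

/-- Reverse of a poset path. -/
def ReebPoset.Path.reverse {x y : X} (γ : Path x y) : Path y x where
  n := γ.n
  pts := fun i => γ.pts i.rev
  first := by show γ.pts (Fin.rev 0) = y; rw [Fin.rev_zero, γ.last]
  last := by show γ.pts (Fin.last γ.n).rev = x; rw [Fin.rev_last, γ.first]
  step := fun i => by
    have h1 : (i.castSucc).rev = (i.rev).succ := by
      ext; simp [Fin.rev]; try omega
    have h2 : (i.succ).rev = (i.rev).castSucc := by
      ext; simp [Fin.rev]; try omega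
    show Cmp (γ.pts i.castSucc.rev) (γ.pts i.succ.rev)
    rw [h1, h2]
    exact Or.symm (γ.step i.rev)

lemma ReebPoset.Path.reverse_pts {x y : X} (γ : Path x y) (i : Fin (γ.n + 1)) :
    γ.reverse.pts i = γ.pts i.rev := rfl

lemma key_le (ht : IsTreePoset X) {f : X → ℝ} (hf : StrictMono f)
    {x y : X} (γ : Path x y) (h : ∀ i : Fin (γ.n + 1), f x ≤ f (γ.pts i)) : x ≤ y := by
  have main : ∀ m : ℕ, ∀ hm : m ≤ γ.n, x ≤ γ.pts ⟨m, by omega⟩ := by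
    intro m
    induction m with
    | zero =>
      intro _
      rw [show (⟨0, by omega⟩ : Fin (γ.n + 1)) = 0 from rfl, γ.first]
    | succ k ih =>
      intro hm
      have hk : k ≤ γ.n := by omega
      have hx := ih hk
      have hstep := γ.step ⟨k, by omega⟩
      have e1 : (⟨k, by omega⟩ : Fin γ.n).castSucc = (⟨k, by omega⟩ : Fin (γ.n + 1)) := rfl
      have e2 : (⟨k, by omega⟩ : Fin γ.n).succ = (⟨k + 1, by omega⟩ : Fin (γ.n + 1)) := rfl
      rw [e1, e2] at hstep
      rcases hstep with hle | hle
      · exact hx.trans hle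
      · rcases ht x (γ.pts ⟨k + 1, by omega⟩) (γ.pts ⟨k, by omega⟩) hx hle with h1 | h1
        · exact h1
        · rcases h1.lt_or_eq with hlt | heq
          · exact absurd (hf hlt) (not_lt.2 (h ⟨k + 1, by omega⟩))
          · exact heq.ge
  have := main γ.n le_rfl
  rwa [show (⟨γ.n, by omega⟩ : Fin (γ.n + 1)) = Fin.last γ.n from rfl, γ.last] at this

end Aux

open ReebPoset in
/-- for a Reeb tree poset `(T, f)` the Reeb tree construction recovers
`T`: classes are singletons and the quotient order is the original order. -/
theorem stmt12 {T : Type*} [PartialOrder T] [Fintype T]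
    (hc : Connected T) (ht : IsTreePoset T) (f : T → ℝ) (hf : StrictMono f) :
    (∀ x y : T, treeEq f x y ↔ x = y) ∧ (∀ x y : T, treeLe f x y ↔ x ≤ y) := by
  constructor
  · intro x y
    constructor
    · rintro ⟨γ, hγ⟩
      have hxy : x ≤ y := key_le ht hf γ (fun i => le_trans (le_max_left _ _) (hγ i))
      have hyx : y ≤ x := by
        refine key_le ht hf γ.reverse (fun i => ?_)
        rw [ReebPoset.Path.reverse_pts γ i]
        exact le_trans (le_max_right _ _) (hγ i.rev)
      exact le_antisymm hxy hyx
    · rintro rfl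
      exact ⟨⟨0, fun _ => x, rfl, rfl, fun i => i.elim0⟩, fun i => by simp⟩
  · intro x y
    constructor
    · rintro ⟨γ, hγ⟩
      exact key_le ht hf γ hγ
    · intro hxy
      refine ⟨⟨1, ![x, y], rfl, rfl, fun i => ?_⟩, fun i => ?_⟩
      · fin_cases i
        exact Or.inl hxy
      · fin_cases i
        · exact le_rfl
        · exact hf.monotone hxy
end

section
/- Let (T, f) be a Reeb tree poset and t_f the Reeb metric. For x, y in T, letting p_{x,y} be the maximum of the chain {z : z ≤ x} ∩ {z : z ≤ y}, one has t_f(x, y) = f(x) + f(y) − 2 f(p_{x,y}). -/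
open scoped Classical

lemma sum_abs_ge_aux (n : ℕ) (g : Fin (n + 1) → ℝ) (k : Fin (n + 1)) :
    (g 0 - g k) + (g (Fin.last n) - g k) ≤
      ∑ i : Fin n, |g i.succ - g i.castSucc| := by
  induction n with
  | zero =>
    have : k = 0 := Fin.fin_one_eq_zero k
    subst this
    simp [Fin.last]
  | succ n ih =>
    have hsum : ∑ i : Fin (n + 1), |g i.succ - g i.castSucc|
        = |g 1 - g 0| + ∑ i : Fin n, |g i.succ.succ - g i.castSucc.succ| := by
      rw [Fin.sum_univ_succ]
      congr 1
    rw [hsum]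
    have ih' := ih (fun j => g j.succ)
    have hlast : (Fin.last n).succ = Fin.last (n + 1) := Fin.succ_last n
    rcases Fin.eq_zero_or_eq_succ k with hk | ⟨j, hk⟩
    · subst hk
      have h1 := ih' 0
      simp only [hlast] at h1
      have h2 : g 1 - g 0 ≤ |g 1 - g 0| := le_abs_self _
      have h0 : (0 : Fin (n+1)).succ = 1 := rfl
      rw [h0] at h1
      linarith
    · subst hk
      have h1 := ih' j
      simp only [hlast] at h1
      have h2 : g 0 - g 1 ≤ |g 1 - g 0| := by
        rw [abs_sub_comm]; exact le_abs_self _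
      have h0 : (0 : Fin (n+1)).succ = 1 := rfl
      rw [h0] at h1
      linarith

open ReebPoset in
lemma path_meet_aux {T : Type*} [PartialOrder T] (ht : IsTreePoset T) :
    ∀ n (pts : Fin (n + 1) → T), (∀ i : Fin n, Cmp (pts i.castSucc) (pts i.succ)) →
      ∃ i, pts i ≤ pts 0 ∧ pts i ≤ pts (Fin.last n) := by
  intro n
  induction n with
  | zero => intro pts _; exact ⟨0, le_refl _, le_of_eq (congrArg pts rfl)⟩
  | succ n ih =>
    intro pts hstep
    obtain ⟨i, hi1, hi2⟩ := ih (fun j => pts j.succ)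
      (fun i => by simpa only [Fin.succ_castSucc] using hstep i.succ)
    have h0 : (0 : Fin (n+1)).succ = 1 := rfl
    rw [h0] at hi1
    rw [Fin.succ_last] at hi2
    have hc01 : Cmp (pts 0) (pts 1) := by
      have := hstep 0
      simpa using this
    rcases hc01 with h01 | h10
    · -- pts 0 ≤ pts 1
      rcases ht (pts i.succ) (pts 0) (pts 1) hi1 h01 with h | h
      · exact ⟨i.succ, h, hi2⟩
      · exact ⟨0, le_refl _, le_trans h hi2⟩
    · exact ⟨i.succ, le_trans hi1 h10, hi2⟩

open ReebPoset in
/-- in a Reeb tree poset, `t_f(x,y) = f x + f y - 2 f(p_{x,y})` where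
`p_{x,y}` is the maximum of the intersection of the two down-sets. -/
theorem stmt13 {T : Type*} [PartialOrder T] [Fintype T]
    (hc : Connected T) (ht : IsTreePoset T) (f : T → ℝ) (hf : StrictMono f)
    (x y p : T) (hpx : p ≤ x) (hpy : p ≤ y)
    (hmax : ∀ z : T, z ≤ x → z ≤ y → z ≤ p) :
    df f x y = f x + f y - 2 * f p := by
  set v : ℝ := f x + f y - 2 * f p with hv
  -- the explicit path x, p, y
  have hγ0 : ∃ γ : Path x y, v = flen f γ := by
    refine ⟨⟨2, ![x, p, y], rfl, rfl, ?_⟩, ?_⟩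
    · intro i
      fin_cases i
      · exact Or.inr hpx
      · exact Or.inl hpy
    · have hfx : f p ≤ f x := hf.monotone hpx
      have hfy : f p ≤ f y := hf.monotone hpy
      simp only [flen, Fin.sum_univ_two]
      have e0 : ((0 : Fin 2).succ : Fin 3) = 1 := rfl
      have e1 : ((0 : Fin 2).castSucc : Fin 3) = 0 := rfl
      have e2 : ((1 : Fin 2).succ : Fin 3) = 2 := rfl
      have e3 : ((1 : Fin 2).castSucc : Fin 3) = 1 := rfl
      rw [e0, e1, e2, e3]
      have m0 : (![x, p, y] : Fin 3 → T) 0 = x := rfl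
      have m1 : (![x, p, y] : Fin 3 → T) 1 = p := rfl
      have m2 : (![x, p, y] : Fin 3 → T) 2 = y := rfl
      rw [m0, m1, m2]
      rw [abs_of_nonpos (by linarith), abs_of_nonneg (by linarith)]
      rw [hv]; ring
  -- lower bound for any path
  have hlb : ∀ L ∈ {L | ∃ γ : Path x y, L = flen f γ}, v ≤ L := by
    rintro L ⟨γ, rfl⟩
    obtain ⟨i, hi1, hi2⟩ := path_meet_aux ht γ.n γ.pts γ.step
    rw [γ.first] at hi1
    rw [γ.last] at hi2
    have hzp : γ.pts i ≤ p := hmax _ hi1 hi2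
    have hfzp : f (γ.pts i) ≤ f p := hf.monotone hzp
    have hkey := sum_abs_ge_aux γ.n (fun j => f (γ.pts j)) i
    have hg0 : f (γ.pts 0) = f x := by rw [γ.first]
    have hgl : f (γ.pts (Fin.last γ.n)) = f y := by rw [γ.last]
    rw [hg0, hgl] at hkey
    unfold flen
    linarith
  obtain ⟨γ0, hγ0eq⟩ := hγ0
  have hne : v ∈ {L | ∃ γ : Path x y, L = flen f γ} := ⟨γ0, hγ0eq⟩
  exact le_antisymm (csInf_le ⟨v, hlb⟩ hne) (le_csInf ⟨v, hne⟩ hlb)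
end

section
/- Let (R, f) be a Reeb poset with Reeb metric d_f. For comparable x ≤ y, d_f(x, y) = f(y) − f(x); in general d_f(x, y) ≥ |f(x) − f(y)|, and moreover d_f(x, y) can be realized as the f-length of a poset path whose image is a fence. -/
open scoped Classical

/-!
A poset path telescopes, so its `f`-length is at least `|f x - f y|`, while for `x ≤ y` the
one-step path has length exactly `f y - f x`. A path that is not a fence either repeats a point
or has two comparable non-consecutive points; cutting out the points in between gives a path
with fewer steps and no larger `f`-length. Hence the infimum defining `d_f` may be taken over
fences only, and a finite poset has only finitely many of them, so it is attained.
-/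

open Finset

theorem sum_range_dist_comp_le {α : Type*} [PseudoMetricSpace α] (u : ℕ → α) {φ : ℕ → ℕ}
    (hφ : Monotone φ) (m : ℕ) :
    ∑ k ∈ range m, dist (u (φ k)) (u (φ (k + 1))) ≤
      ∑ j ∈ Ico (φ 0) (φ m), dist (u j) (u (j + 1)) := by
  induction m with
  | zero => simp
  | succ m ih =>
    rw [sum_range_succ, ← sum_Ico_consecutive _ (hφ m.zero_le) (hφ m.le_succ)]
    exact add_le_add ih (dist_le_Ico_sum_dist u (hφ m.le_succ))

namespace ReebPoset

variable {X : Type*} [PartialOrder X]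

theorem cmp_of_le {a b : X} (h : a ≤ b) : Cmp a b := Or.inl h

namespace Path

variable {x y : X}

/-- The `k`-th point of `γ`, read as `y` for every `k ≥ γ.n`. -/
def point (γ : Path x y) (k : ℕ) : X :=
  γ.pts ⟨min k γ.n, Nat.lt_succ_of_le (min_le_right _ _)⟩

theorem point_val (γ : Path x y) (i : Fin (γ.n + 1)) : γ.point i = γ.pts i :=
  congrArg γ.pts (Fin.ext (min_eq_left (Nat.le_of_lt_succ i.2)))

theorem point_zero (γ : Path x y) : γ.point 0 = x := by
  simpa using γ.point_val 0 |>.trans γ.first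

theorem point_of_le (γ : Path x y) {k : ℕ} (hk : γ.n ≤ k) : γ.point k = y :=
  (congrArg γ.pts (Fin.ext (min_eq_right hk))).trans γ.last

theorem cmp_point_succ (γ : Path x y) {k : ℕ} (hk : k < γ.n) :
    Cmp (γ.point k) (γ.point (k + 1)) := by
  simpa [← point_val] using γ.step ⟨k, hk⟩

theorem flen_eq_sum_dist (f : X → ℝ) (γ : Path x y) :
    flen f γ = ∑ k ∈ range γ.n, dist (f (γ.point k)) (f (γ.point (k + 1))) := by
  rw [flen, ← Fin.sum_univ_eq_sum_range]
  refine sum_congr rfl fun i _ => ?_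
  rw [dist_comm, Real.dist_eq, ← point_val, ← point_val]
  rfl

theorem abs_sub_le_flen (f : X → ℝ) (γ : Path x y) : |f x - f y| ≤ flen f γ := by
  calc |f x - f y| = dist (f (γ.point 0)) (f (γ.point γ.n)) := by
        rw [point_zero, γ.point_of_le le_rfl, Real.dist_eq]
    _ ≤ flen f γ := by
        rw [flen_eq_sum_dist]
        exact dist_le_range_sum_dist (fun k => f (γ.point k)) γ.n

def ofCmp (h : Cmp x y) : Path x y where
  n := 1
  pts := ![x, y]
  first := rfl
  last := rfl
  step i := by fin_cases i; exact h

theorem flen_ofCmp (f : X → ℝ) (h : Cmp x y) : flen f (ofCmp h) = |f y - f x| := by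
  show ∑ _ : Fin 1, _ = _
  rw [Fin.sum_univ_one]
  rfl

theorem exists_flen_le_of_monotone (f : X → ℝ) (γ : Path x y) {φ : ℕ → ℕ} (hφ : Monotone φ)
    (m : ℕ) (h0 : φ 0 = 0) (hm : φ m ≤ γ.n) (hend : γ.point (φ m) = y)
    (hstep : ∀ k < m, Cmp (γ.point (φ k)) (γ.point (φ (k + 1)))) :
    ∃ δ : Path x y, δ.n = m ∧ flen f δ ≤ flen f γ := by
  let δ : Path x y :=
    ⟨m, fun i => γ.point (φ i), by simpa [h0] using γ.point_zero, by simpa using hend,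
      fun i => hstep i i.2⟩
  have hδ : ∀ k ≤ m, δ.point k = γ.point (φ k) := fun k hk => by
    simp only [point, δ, min_eq_left hk]
  refine ⟨δ, rfl, ?_⟩
  calc flen f δ = ∑ k ∈ range m, dist (f (γ.point (φ k))) (f (γ.point (φ (k + 1)))) := by
        rw [flen_eq_sum_dist]
        refine sum_congr rfl fun k hk => ?_
        rw [mem_range] at hk
        rw [hδ k hk.le, hδ (k + 1) hk]
    _ ≤ ∑ j ∈ Ico 0 (φ m), dist (f (γ.point j)) (f (γ.point (j + 1))) := by
        simpa [h0] using sum_range_dist_comp_le (fun k => f (γ.point k)) hφ m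
    _ ≤ flen f γ := by
        rw [flen_eq_sum_dist, ← Nat.Ico_zero_eq_range]
        exact sum_le_sum_of_subset_of_nonneg (Ico_subset_Ico_right hm)
          fun _ _ _ => dist_nonneg

/-- Drop the points with indices `a + 1, …, a + r`. -/
theorem exists_flen_le_of_drop (f : X → ℝ) (γ : Path x y) {a r : ℕ} (har : a + r ≤ γ.n)
    (hstep : a + r < γ.n → Cmp (γ.point a) (γ.point (a + r + 1)))
    (hlast : a + r = γ.n → γ.point a = y) :
    ∃ δ : Path x y, δ.n = γ.n - r ∧ flen f δ ≤ flen f γ := by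
  refine γ.exists_flen_le_of_monotone f (φ := fun k => if k ≤ a then k else k + r)
    (fun i j hij => by dsimp only; split_ifs <;> omega) (γ.n - r) (by simp)
    (by split_ifs <;> omega) ?_ fun k hk => ?_
  · by_cases h : a + r = γ.n
    · simpa [show γ.n - r = a by omega] using hlast h
    · simpa [show ¬γ.n - r ≤ a by omega] using γ.point_of_le (show γ.n ≤ γ.n - r + r by omega)
  · rcases lt_trichotomy k a with hka | rfl | hka
    · simpa [hka.le, Nat.succ_le_of_lt hka] using γ.cmp_point_succ (show k < γ.n by omega)
    · simpa [add_right_comm] using hstep (by omega)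
    · simpa [show ¬k ≤ a by omega, show ¬k + 1 ≤ a by omega, add_right_comm]
        using γ.cmp_point_succ (show k + r < γ.n by omega)

theorem exists_drop_of_not_isFence (γ : Path x y) (hγ : ¬IsFence γ) :
    ∃ a r : ℕ, 0 < r ∧ a + r ≤ γ.n ∧
      (a + r < γ.n → Cmp (γ.point a) (γ.point (a + r + 1))) ∧
      (a + r = γ.n → γ.point a = y) := by
  rw [IsFence, not_and_or, Function.not_injective_iff] at hγ
  push Not at hγ
  rcases hγ with ⟨i, j, hij, hne⟩ | ⟨i, j, hij, hcmp⟩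
  · -- a repeated point: cut out the loop between its two occurrences
    wlog hlt : i < j generalizing i j
    · exact this j i hij.symm (Ne.symm hne) (lt_of_le_of_ne (not_lt.1 hlt) (Ne.symm hne))
    have hpt : γ.point i = γ.point j := by rwa [point_val, point_val]
    refine ⟨i, j - i, by omega, by omega, fun h => ?_, fun h => ?_⟩
    · rw [hpt, show (i : ℕ) + (j - i) = j by omega]
      exact γ.cmp_point_succ (by omega)
    · rw [hpt]
      exact γ.point_of_le (by omega)
  · refine ⟨i, j - i - 1, by omega, by omega, fun _ => ?_, fun h => by omega⟩
    rwa [show (i : ℕ) + (j - i - 1) + 1 = j by omega, point_val, point_val]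

theorem exists_isFence_flen_le (f : X → ℝ) (γ : Path x y) :
    ∃ δ : Path x y, IsFence δ ∧ flen f δ ≤ flen f γ := by
  induction hn : γ.n using Nat.strong_induction_on generalizing γ with
  | _ n ih =>
  by_cases hγ : IsFence γ
  · exact ⟨γ, hγ, le_rfl⟩
  obtain ⟨a, r, hr, har, hstep, hlast⟩ := γ.exists_drop_of_not_isFence hγ
  obtain ⟨δ, hδn, hδ⟩ := γ.exists_flen_le_of_drop f har hstep hlast
  obtain ⟨ε, hε, hεδ⟩ := ih δ.n (by omega) δ rfl
  exact ⟨ε, hε, hεδ.trans hδ⟩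

end Path

theorem IsFence.n_lt_card [Fintype X] {x y : X} {γ : Path x y} (hγ : IsFence γ) :
    γ.n < Fintype.card X := by
  simpa using Fintype.card_le_of_injective γ.pts hγ.1

theorem finite_setOf_flen_isFence [Fintype X] (f : X → ℝ) (x y : X) :
    {L | ∃ γ : Path x y, IsFence γ ∧ L = flen f γ}.Finite := by
  let F : (Σ m : Fin (Fintype.card X), (Fin (m + 1) → X)) → ℝ :=
    fun p => ∑ i : Fin p.1, |f (p.2 i.succ) - f (p.2 i.castSucc)|
  refine (Set.finite_range F).subset ?_
  rintro _ ⟨γ, hγ, rfl⟩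
  exact ⟨⟨⟨γ.n, hγ.n_lt_card⟩, γ.pts⟩, rfl⟩

theorem df_eq_sub_of_le {f : X → ℝ} (hf : Monotone f) {x y : X} (hxy : x ≤ y) :
    df f x y = f y - f x := by
  refine IsLeast.csInf_eq ⟨⟨Path.ofCmp (cmp_of_le hxy), ?_⟩, ?_⟩
  · rw [Path.flen_ofCmp, abs_of_nonneg (sub_nonneg.2 (hf hxy))]
  · rintro _ ⟨γ, rfl⟩
    exact (le_abs_self _).trans (abs_sub_comm (f y) (f x) ▸ γ.abs_sub_le_flen f)

theorem abs_sub_le_df (f : X → ℝ) {x y : X} (h : Nonempty (Path x y)) :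
    |f x - f y| ≤ df f x y :=
  le_csInf ⟨_, h.some, rfl⟩ fun _ ⟨γ, hγ⟩ => hγ ▸ γ.abs_sub_le_flen f

theorem exists_isFence_flen_eq_df [Fintype X] (f : X → ℝ) {x y : X} (h : Nonempty (Path x y)) :
    ∃ γ : Path x y, IsFence γ ∧ flen f γ = df f x y := by
  obtain ⟨γ₀, hγ₀, -⟩ := h.some.exists_isFence_flen_le f
  obtain ⟨_, ⟨γ, hγ, rfl⟩, hmin⟩ :=
    Set.exists_min_image _ id (finite_setOf_flen_isFence f x y) ⟨_, γ₀, hγ₀, rfl⟩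
  have hleast : IsLeast {L | ∃ δ : Path x y, L = flen f δ} (flen f γ) := by
    refine ⟨⟨γ, rfl⟩, ?_⟩
    rintro _ ⟨δ, rfl⟩
    obtain ⟨ε, hε, hεδ⟩ := δ.exists_isFence_flen_le f
    exact (hmin _ ⟨ε, hε, rfl⟩).trans hεδ
  exact ⟨γ, hγ, hleast.csInf_eq.symm⟩

end ReebPoset

open ReebPoset in
/-- for a Reeb poset, `d_f(x,y) = f y - f x` when `x ≤ y`; in general
`d_f(x,y) ≥ |f x - f y|`; and `d_f(x,y)` is realized by a fence. -/
theorem stmt14 {R : Type*} [PartialOrder R] [Fintype R]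
    (hc : Connected R) (f : R → ℝ) (hf : StrictMono f) (x y : R) :
    (x ≤ y → df f x y = f y - f x) ∧
    |f x - f y| ≤ df f x y ∧
    (∃ γ : Path x y, IsFence γ ∧ flen f γ = df f x y) :=
  ⟨df_eq_sub_of_le hf.monotone, abs_sub_le_df f (hc x y), exists_isFence_flen_eq_df f (hc x y)⟩
end

section
/- A Reeb poset (T, f) is a Reeb tree poset (T is a tree poset) if and only if its hyperbolicity hyp_f(T) equals 0, where hyp_f(T) is the least ε ≥ 0 such that g_f(x,z) ≥ min(g_f(x,y), g_f(y,z)) − ε for all x, y, z, with g_f(x,y) = (f(x) + f(y) − d_f(x,y))/2. -/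
open scoped Classical

namespace Stmt16Aux
open ReebPoset

variable {T : Type*} [PartialOrder T]

/-- Telescoping bound: `|u n - u 0| ≤ ∑ |u (j+1) - u j|`. -/
lemma telescope_abs (u : ℕ → ℝ) (n : ℕ) :
    |u n - u 0| ≤ ∑ j ∈ Finset.range n, |u (j + 1) - u j| := by
  rw [← Finset.sum_range_sub u n]
  exact Finset.abs_sum_le_sum_abs _ _

lemma flen_nonneg (f : T → ℝ) {x y : T} (γ : Path x y) : 0 ≤ flen f γ :=
  Finset.sum_nonneg fun _ _ => abs_nonneg _

lemma df_bddBelow (f : T → ℝ) (x y : T) :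
    BddBelow {L | ∃ γ : Path x y, L = flen f γ} := by
  refine ⟨0, ?_⟩
  rintro L ⟨γ, rfl⟩
  exact flen_nonneg f γ

lemma df_le_flen (f : T → ℝ) {x y : T} (γ : Path x y) : df f x y ≤ flen f γ :=
  csInf_le (df_bddBelow f x y) ⟨γ, rfl⟩

lemma le_df (f : T → ℝ) {x y : T} (hne : Nonempty (Path x y)) {c : ℝ}
    (h : ∀ γ : Path x y, c ≤ flen f γ) : c ≤ df f x y := by
  obtain ⟨γ₀⟩ := hne
  refine le_csInf ⟨flen f γ₀, γ₀, rfl⟩ ?_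
  rintro L ⟨γ, rfl⟩
  exact h γ

/-- The natural-number reparametrization of a path. -/
def qp {x y : T} (γ : Path x y) (k : ℕ) : T :=
  γ.pts ⟨min k γ.n, Nat.lt_succ_of_le (min_le_right _ _)⟩

lemma qp_zero {x y : T} (γ : Path x y) : qp γ 0 = x := by
  have h : (⟨min 0 γ.n, Nat.lt_succ_of_le (min_le_right _ _)⟩ : Fin (γ.n + 1)) = 0 := by
    ext; simp
  rw [qp, h, γ.first]

lemma qp_last {x y : T} (γ : Path x y) : qp γ γ.n = y := by
  have h : (⟨min γ.n γ.n, Nat.lt_succ_of_le (min_le_right _ _)⟩ : Fin (γ.n + 1)) = Fin.last γ.n := by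
    ext; simp
  rw [qp, h, γ.last]

lemma qp_coe {x y : T} (γ : Path x y) (i : Fin γ.n) : qp γ (i : ℕ) = γ.pts i.castSucc := by
  unfold qp; congr 1; ext; simp [Nat.min_eq_left i.isLt.le]

lemma qp_coe_succ {x y : T} (γ : Path x y) (i : Fin γ.n) :
    qp γ ((i : ℕ) + 1) = γ.pts i.succ := by
  unfold qp; congr 1; ext; simp [Nat.min_eq_left (Nat.succ_le_of_lt i.isLt)]

lemma qp_step {x y : T} (γ : Path x y) : ∀ k < γ.n, Cmp (qp γ k) (qp γ (k + 1)) := by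
  intro k hk
  have h := γ.step ⟨k, hk⟩
  have e1 := qp_coe γ ⟨k, hk⟩
  have e2 := qp_coe_succ γ ⟨k, hk⟩
  simp only [Fin.val_mk] at e1 e2
  rw [e1, e2]; exact h

lemma flen_eq_range (f : T → ℝ) {x y : T} (γ : Path x y) :
    flen f γ = ∑ j ∈ Finset.range γ.n, |f (qp γ (j + 1)) - f (qp γ j)| := by
  rw [← Fin.sum_univ_eq_sum_range (fun j => |f (qp γ (j + 1)) - f (qp γ j)|) γ.n]
  unfold flen
  refine Finset.sum_congr rfl fun i _ => ?_
  rw [qp_coe γ i, qp_coe_succ γ i]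

lemma flen_ge_abs (f : T → ℝ) {x y : T} (γ : Path x y) : |f y - f x| ≤ flen f γ := by
  rw [flen_eq_range]
  have h := telescope_abs (fun k => f (qp γ k)) γ.n
  simpa [qp_zero, qp_last] using h

end Stmt16Aux
namespace Stmt16Aux
open ReebPoset
variable {T : Type*} [PartialOrder T]

lemma chain_le (p : ℕ → T) : ∀ n, (∀ k < n, p k ≤ p (k + 1)) → p 0 ≤ p n
  | 0, _ => le_refl _
  | n + 1, h => (chain_le p n fun k hk => h k (by omega)).trans (h n (by omega))

lemma chain_ge (p : ℕ → T) : ∀ n, (∀ k < n, p (k + 1) ≤ p k) → p n ≤ p 0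
  | 0, _ => le_refl _
  | n + 1, h => (h n (by omega)).trans (chain_ge p n fun k hk => h k (by omega))

/-- In a tree poset, every path contains a common lower bound of its endpoints. -/
lemma clb (ht : IsTreePoset T) (p : ℕ → T) :
    ∀ n, (∀ k < n, Cmp (p k) (p (k + 1))) → ∃ i ≤ n, p i ≤ p 0 ∧ p i ≤ p n
  | 0, _ => ⟨0, le_refl _, le_refl _, le_refl _⟩
  | n + 1, h => by
    obtain ⟨i, hin, h0, hn⟩ := clb ht p n (fun k hk => h k (by omega))
    rcases h n (by omega) with hup | hdn
    · exact ⟨i, by omega, h0, hn.trans hup⟩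
    · rcases ht (p i) (p (n + 1)) (p n) hn hdn with h1 | h2
      · exact ⟨i, by omega, h0, h1⟩
      · exact ⟨n + 1, le_refl _, h2.trans h0, le_refl _⟩

lemma exists_down (p : ℕ → T) (n : ℕ) (hstep : ∀ k < n, Cmp (p k) (p (k + 1)))
    (h : ¬ p 0 ≤ p n) : ∃ k < n, p (k + 1) < p k := by
  by_contra hno
  push_neg at hno
  refine h (chain_le p n fun k hk => ?_)
  rcases hstep k hk with h' | h'
  · exact h'
  · rcases h'.lt_or_eq with h'' | h''
    · exact absurd h'' (hno k hk)
    · exact h''.ge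

lemma exists_up (p : ℕ → T) (n : ℕ) (hstep : ∀ k < n, Cmp (p k) (p (k + 1)))
    (h : ¬ p n ≤ p 0) : ∃ k < n, p k < p (k + 1) := by
  by_contra hno
  push_neg at hno
  refine h (chain_ge p n fun k hk => ?_)
  rcases hstep k hk with h' | h'
  · rcases h'.lt_or_eq with h'' | h''
    · exact absurd h'' (hno k hk)
    · exact h''.ge
  · exact h'

lemma sum_abs_ge_down (u : ℕ → ℝ) (n k : ℕ) (hk : k < n) :
    (u n - u 0) + (|u (k + 1) - u k| - (u (k + 1) - u k)) ≤
      ∑ j ∈ Finset.range n, |u (j + 1) - u j| := by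
  have h1 : ∑ j ∈ Finset.range n, (u (j + 1) - u j) = u n - u 0 := Finset.sum_range_sub u n
  have h2 : |u (k + 1) - u k| - (u (k + 1) - u k) ≤
      ∑ j ∈ Finset.range n, (|u (j + 1) - u j| - (u (j + 1) - u j)) :=
    Finset.single_le_sum (f := fun j => |u (j + 1) - u j| - (u (j + 1) - u j))
      (fun j _ => sub_nonneg.mpr (le_abs_self _)) (Finset.mem_range.mpr hk)
  rw [Finset.sum_sub_distrib, h1] at h2
  linarith

lemma sum_abs_ge_up (u : ℕ → ℝ) (n k : ℕ) (hk : k < n) :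
    (u 0 - u n) + (|u (k + 1) - u k| + (u (k + 1) - u k)) ≤
      ∑ j ∈ Finset.range n, |u (j + 1) - u j| := by
  have h1 : ∑ j ∈ Finset.range n, (u (j + 1) - u j) = u n - u 0 := Finset.sum_range_sub u n
  have h2 : |u (k + 1) - u k| + (u (k + 1) - u k) ≤
      ∑ j ∈ Finset.range n, (|u (j + 1) - u j| + (u (j + 1) - u j)) :=
    Finset.single_le_sum (f := fun j => |u (j + 1) - u j| + (u (j + 1) - u j))
      (fun j _ => by linarith [neg_abs_le (u (j + 1) - u j)])
      (Finset.mem_range.mpr hk)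
  rw [Finset.sum_add_distrib, h1] at h2
  linarith

lemma split_bound (u : ℕ → ℝ) (n i : ℕ) (hi : i ≤ n) :
    (u 0 - u i) + (u n - u i) ≤ ∑ j ∈ Finset.range n, |u (j + 1) - u j| := by
  rw [← Finset.sum_range_add_sum_Ico _ hi]
  have h1 : u 0 - u i ≤ ∑ j ∈ Finset.range i, |u (j + 1) - u j| := by
    have := telescope_abs u i
    have := neg_abs_le (u i - u 0)
    linarith
  have h2 : u n - u i ≤ ∑ j ∈ Finset.Ico i n, |u (j + 1) - u j| := by
    rw [Finset.sum_Ico_eq_sum_range]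
    have ht := telescope_abs (fun k => u (i + k)) (n - i)
    simp only [Nat.add_zero, show i + (n - i) = n from by omega] at ht
    calc u n - u i ≤ |u n - u i| := le_abs_self _
      _ ≤ _ := ht
  linarith

end Stmt16Aux
namespace Stmt16Aux
open ReebPoset
variable {T : Type*} [PartialOrder T]

/-- The two-point path between comparable elements. -/
def path2 {x y : T} (h : Cmp x y) : Path x y where
  n := 1
  pts := ![x, y]
  first := rfl
  last := rfl
  step := fun i => by
    have hi : i = 0 := Subsingleton.elim _ _
    subst hi
    simpa using h

/-- The three-point path through a middle element. -/
def path3 {x y : T} (m : T) (h1 : Cmp x m) (h2 : Cmp m y) : Path x y where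
  n := 2
  pts := ![x, m, y]
  first := rfl
  last := rfl
  step := fun i => by
    fin_cases i
    · simpa using h1
    · simpa using h2

lemma flen_path2 (f : T → ℝ) {x y : T} (h : Cmp x y) : flen f (path2 h) = |f y - f x| := by
  simp only [flen]
  show ∑ i : Fin 1, _ = _
  simp [path2]

lemma flen_path3 (f : T → ℝ) {x y : T} (m : T) (h1 : Cmp x m) (h2 : Cmp m y) :
    flen f (path3 m h1 h2) = |f m - f x| + |f y - f m| := by
  simp only [flen]
  show ∑ i : Fin 2, _ = _
  simp [path3, Fin.sum_univ_two]

lemma df_of_le (f : T → ℝ) (hf : StrictMono f) {u v : T} (h : u ≤ v) :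
    df f u v = f v - f u := by
  refine le_antisymm ?_ (le_df f ⟨path2 (Or.inl h)⟩ fun γ =>
    (le_abs_self _).trans (flen_ge_abs f γ))
  have h1 := (df_le_flen f (path2 (Or.inl h))).trans_eq (flen_path2 f _)
  rwa [abs_of_nonneg (sub_nonneg.mpr (hf.monotone h))] at h1

lemma df_of_ge (f : T → ℝ) (hf : StrictMono f) {u v : T} (h : v ≤ u) :
    df f u v = f u - f v := by
  refine le_antisymm ?_ (le_df f ⟨path2 (Or.inr h)⟩ fun γ => ?_)
  · have h1 := (df_le_flen f (path2 (Or.inr h))).trans_eq (flen_path2 f _)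
    rwa [abs_of_nonpos (sub_nonpos.mpr (hf.monotone h)), neg_sub] at h1
  · calc f u - f v ≤ |f v - f u| := by rw [abs_sub_comm]; exact le_abs_self _
      _ ≤ flen f γ := flen_ge_abs f γ

lemma gf_of_le (f : T → ℝ) (hf : StrictMono f) {u v : T} (h : u ≤ v) :
    gf f u v = f u := by
  rw [gf, df_of_le f hf h]; ring

lemma gf_of_ge (f : T → ℝ) (hf : StrictMono f) {u v : T} (h : v ≤ u) :
    gf f u v = f v := by
  rw [gf, df_of_ge f hf h]; ring

end Stmt16Aux
namespace Stmt16Aux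
open ReebPoset
variable {T : Type*} [PartialOrder T]

lemma exists_meet [Fintype T] (ht : IsTreePoset T) (hc : Connected T)
    (f : T → ℝ) (hf : StrictMono f) (x y : T) :
    ∃ m : T, m ≤ x ∧ m ≤ y ∧ (∀ w, w ≤ x → w ≤ y → f w ≤ f m) ∧ gf f x y = f m := by
  obtain ⟨γ⟩ := hc x y
  obtain ⟨i, hin, h0, hn⟩ := clb ht (qp γ) γ.n (qp_step γ)
  rw [qp_zero] at h0
  rw [qp_last] at hn
  set s : Finset T := Finset.univ.filter (fun w => w ≤ x ∧ w ≤ y) with hs_def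
  have hs : s.Nonempty := ⟨qp γ i, by simp [hs_def, h0, hn]⟩
  obtain ⟨m, hms, hmax⟩ := Finset.exists_max_image s f hs
  have hmem : m ≤ x ∧ m ≤ y := by simpa [hs_def] using hms
  have hmax' : ∀ w, w ≤ x → w ≤ y → f w ≤ f m := fun w h1 h2 =>
    hmax w (by simp [hs_def, h1, h2])
  have hdf : df f x y = f x + f y - 2 * f m := by
    refine le_antisymm ?_ ?_
    · have h1 := (df_le_flen f (path3 m (Or.inr hmem.1) (Or.inl hmem.2))).trans_eq
        (flen_path3 f m _ _)
      rw [abs_of_nonpos (sub_nonpos.mpr (hf.monotone hmem.1)),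
        abs_of_nonneg (sub_nonneg.mpr (hf.monotone hmem.2))] at h1
      linarith
    · refine le_df f (hc x y) fun γ' => ?_
      obtain ⟨j, hjn, hj0, hjn'⟩ := clb ht (qp γ') γ'.n (qp_step γ')
      rw [qp_zero] at hj0
      rw [qp_last] at hjn'
      have hw := hmax' _ hj0 hjn'
      have hsplit := split_bound (fun k => f (qp γ' k)) γ'.n j hjn
      simp only [qp_zero, qp_last] at hsplit
      rw [flen_eq_range]
      linarith
  refine ⟨m, hmem.1, hmem.2, hmax', ?_⟩
  rw [gf, hdf]; ring

end Stmt16Aux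
open Stmt16Aux

open ReebPoset in
/-- a Reeb poset is a Reeb tree poset iff its hyperbolicity is `0`. -/
theorem stmt16 {T : Type*} [PartialOrder T] [Fintype T]
    (hc : Connected T) (f : T → ℝ) (hf : StrictMono f) :
    IsTreePoset T ↔ hypf T f = 0 := by
  constructor
  · intro ht
    have h0mem : (0 : ℝ) ∈ {ε : ℝ | 0 ≤ ε ∧
        ∀ x y z : T, gf f x z ≥ min (gf f x y) (gf f y z) - ε} := by
      refine ⟨le_refl 0, fun x y z => ?_⟩
      obtain ⟨m1, hm1x, hm1y, hmax1, hgf1⟩ := exists_meet ht hc f hf x y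
      obtain ⟨m2, hm2y, hm2z, hmax2, hgf2⟩ := exists_meet ht hc f hf y z
      obtain ⟨m3, hm3x, hm3z, hmax3, hgf3⟩ := exists_meet ht hc f hf x z
      rw [hgf1, hgf2, hgf3, sub_zero, ge_iff_le]
      rcases ht m1 m2 y hm1y hm2y with h12 | h21
      · exact (min_le_left _ _).trans (hmax3 m1 hm1x (h12.trans hm2z))
      · exact (min_le_right _ _).trans (hmax3 m2 (h21.trans hm1x) hm2z)
    unfold hypf
    exact le_antisymm (csInf_le ⟨0, fun ε hε => hε.1⟩ h0mem)
      (le_csInf ⟨0, h0mem⟩ fun ε hε => hε.1)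
  · intro h0
    by_contra hnot
    unfold IsTreePoset at hnot
    push_neg at hnot
    obtain ⟨a, b, c, hac, hbc, hab, hba⟩ := hnot
    have hT : Nonempty T := ⟨a⟩
    have haltc : a < c := lt_of_le_of_ne hac (by rintro rfl; exact hba hbc)
    -- the minimal positive gap δ
    set P : Finset (T × T) := Finset.univ.filter (fun p => p.1 < p.2) with hP_def
    have hPne : P.Nonempty := ⟨(a, c), by simp [hP_def, haltc]⟩
    obtain ⟨p₀, hp₀, hp₀min⟩ := Finset.exists_min_image P (fun p => f p.2 - f p.1) hPne
    set δ := f p₀.2 - f p₀.1 with hδ_def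
    have hδpos : 0 < δ := sub_pos.mpr (hf ((Finset.mem_filter.mp hp₀).2))
    have hgap : ∀ u v : T, u < v → δ ≤ f v - f u := fun u v huv =>
      hp₀min (u, v) (by simp [hP_def, huv])
    -- every path from a to b is longer than |f b - f a| by at least 2δ
    have hlong : ∀ γ : Path a b, |f b - f a| + 2 * δ ≤ flen f γ := by
      intro γ
      have hstep := qp_step γ
      have h1 : ¬ qp γ 0 ≤ qp γ γ.n := by rw [qp_zero, qp_last]; exact hab
      have h2 : ¬ qp γ γ.n ≤ qp γ 0 := by rw [qp_zero, qp_last]; exact hba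
      obtain ⟨k, hk, hdown⟩ := exists_down (qp γ) γ.n hstep h1
      obtain ⟨k', hk', hup⟩ := exists_up (qp γ) γ.n hstep h2
      have hd := sum_abs_ge_down (fun j => f (qp γ j)) γ.n k hk
      have hu := sum_abs_ge_up (fun j => f (qp γ j)) γ.n k' hk'
      simp only [qp_zero, qp_last] at hd hu
      have hdk : f (qp γ (k + 1)) - f (qp γ k) ≤ -δ := by
        have h := hgap _ _ hdown; linarith only [h]
      have huk : δ ≤ f (qp γ (k' + 1)) - f (qp γ k') := hgap _ _ hup
      rw [abs_of_nonpos (by linarith only [hdk, hδpos])] at hd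
      rw [abs_of_nonneg (by linarith only [huk, hδpos])] at hu
      rw [flen_eq_range]
      rcases abs_cases (f b - f a) with ⟨he, _⟩ | ⟨he, _⟩ <;> rw [he] <;> linarith only [hd, hu, hdk, huk]
    have hdfab : |f b - f a| + 2 * δ ≤ df f a b := le_df f (hc a b) hlong
    -- extract a small ε from hyperbolicity 0
    unfold hypf at h0
    set S := {ε : ℝ | 0 ≤ ε ∧
        ∀ x y z : T, gf f x z ≥ min (gf f x y) (gf f y z) - ε} with hS_def
    have hSne : S.Nonempty := by
      have hune : (Finset.univ : Finset (T × T × T)).Nonempty := Finset.univ_nonempty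
      refine ⟨max (Finset.univ.sup' hune (fun t : T × T × T =>
        min (gf f t.1 t.2.1) (gf f t.2.1 t.2.2) - gf f t.1 t.2.2)) 0,
        le_max_right _ _, fun x y z => ?_⟩
      have h1 := Finset.le_sup' (fun t : T × T × T =>
        min (gf f t.1 t.2.1) (gf f t.2.1 t.2.2) - gf f t.1 t.2.2) (Finset.mem_univ (x, y, z))
      have h2 := le_max_left (Finset.univ.sup' hune (fun t : T × T × T =>
        min (gf f t.1 t.2.1) (gf f t.2.1 t.2.2) - gf f t.1 t.2.2)) (0 : ℝ)
      simp only at h1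
      linarith only [h1, h2]
    obtain ⟨ε, hεS, hεδ⟩ := exists_lt_of_csInf_lt hSne (by rw [h0]; exact hδpos)
    have hineq := hεS.2 a c b
    rw [gf_of_le f hf hac, gf_of_ge f hf hbc] at hineq
    have hgfab : gf f a b = (f a + f b - df f a b) / 2 := rfl
    rcases le_total (f a) (f b) with hfab | hfab
    · rw [min_eq_left hfab] at hineq
      rw [abs_of_nonneg (by linarith only [hfab] : (0:ℝ) ≤ f b - f a)] at hdfab
      rw [hgfab] at hineq
      linarith only [hineq, hdfab, hεδ]
    · rw [min_eq_right hfab] at hineq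
      rw [abs_of_nonpos (by linarith only [hfab] : f b - f a ≤ (0:ℝ))] at hdfab
      rw [hgfab] at hineq
      linarith only [hineq, hdfab, hεδ]
end

section
/- Let X be a finite connected poset, f : X → ℝ order preserving, and define m_f(x,y) = max over poset paths γ from x to y of min(f ∘ γ), and g_f(x,y) = (f(x) + f(y) − d_f(x,y))/2. Then m_f(x,y) ≥ g_f(x,y) for all x, y. -/
open scoped Classical

/-!
Along any poset path `γ` from `x` to `y`, the `f`-length is at least the distance travelled by
`f` from `f x` down to the minimum `min (f ∘ γ)` and back up to `f y`, i.e.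
`f x + f y - 2 min (f ∘ γ) ≤ flen f γ`. Bounding `min (f ∘ γ)` by `m_f(x, y)` and taking the
infimum over `γ` gives `f x + f y - 2 m_f(x, y) ≤ d_f(x, y)`, which is the claim.
-/

namespace ReebPoset

variable {X : Type*} [PartialOrder X] {x y : X} (f : X → ℝ) (γ : Path x y)

-- Continued constantly after the endpoint so that the telescoping bounds for sequences on `ℕ` apply.
noncomputable def Path.value (i : ℕ) : ℝ :=
  f (γ.pts (Fin.clamp i γ.n))

noncomputable def Path.minValue : ℝ :=
  Finset.univ.inf' Finset.univ_nonempty fun i : Fin (γ.n + 1) => f (γ.pts i)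

lemma Path.value_zero : γ.value f 0 = f x := by
  simp [value, Fin.clamp, ← γ.first]

lemma Path.value_n : γ.value f γ.n = f y := by
  simp [value, Fin.clamp, ← γ.last, Fin.last]

lemma Path.value_val (k : Fin (γ.n + 1)) :
    γ.value f k = f (γ.pts k) := by
  simp [value, Fin.clamp, Nat.lt_succ_iff.mp k.isLt]

lemma Path.flen_eq_sum_range :
    flen f γ = ∑ i ∈ Finset.range γ.n, dist (γ.value f i) (γ.value f (i + 1)) := by
  rw [flen, ← Fin.sum_univ_eq_sum_range]
  refine Finset.sum_congr rfl fun i _ => ?_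
  have h₀ := value_val f γ i.castSucc
  have h₁ := value_val f γ i.succ
  rw [Fin.val_castSucc] at h₀
  rw [Fin.val_succ] at h₁
  rw [h₀, h₁, Real.dist_eq, abs_sub_comm]

lemma Path.dist_add_dist_le_flen (k : Fin (γ.n + 1)) :
    dist (f x) (f (γ.pts k)) + dist (f (γ.pts k)) (f y) ≤ flen f γ := by
  have hk : (k : ℕ) ≤ γ.n := Nat.lt_succ_iff.mp k.isLt
  rw [flen_eq_sum_range, Finset.range_eq_Ico, ← Finset.sum_Ico_consecutive _ k.val.zero_le hk,
    ← value_zero f γ, ← value_n f γ, ← value_val f γ k]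
  exact add_le_add (dist_le_Ico_sum_dist _ k.val.zero_le) (dist_le_Ico_sum_dist _ hk)

lemma Path.sub_two_mul_minValue_le_flen :
    f x + f y - 2 * γ.minValue f ≤ flen f γ := by
  obtain ⟨k, -, hk⟩ := Finset.exists_mem_eq_inf' Finset.univ_nonempty
    fun i : Fin (γ.n + 1) => f (γ.pts i)
  have := dist_add_dist_le_flen f γ k
  rw [Real.dist_eq, Real.dist_eq] at this
  rw [minValue, hk]
  linarith [le_abs_self (f x - f (γ.pts k)), le_abs_self (f y - f (γ.pts k)),
    abs_sub_comm (f (γ.pts k)) (f y)]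

lemma Path.minValue_le_left : γ.minValue f ≤ f x :=
  calc γ.minValue f ≤ f (γ.pts 0) := Finset.inf'_le _ (Finset.mem_univ 0)
    _ = f x := by rw [γ.first]

lemma minValue_le_mf : γ.minValue f ≤ mf f x y :=
  le_csSup ⟨f x, by rintro m ⟨δ, rfl⟩; exact δ.minValue_le_left f⟩ ⟨γ, rfl⟩

lemma sub_two_mul_mf_le_df (hxy : Nonempty (Path x y)) :
    f x + f y - 2 * mf f x y ≤ df f x y := by
  obtain ⟨γ₀⟩ := hxy
  refine le_csInf ⟨flen f γ₀, γ₀, rfl⟩ ?_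
  rintro L ⟨γ, rfl⟩
  linarith [γ.sub_two_mul_minValue_le_flen f, minValue_le_mf f γ]

end ReebPoset

open ReebPoset in
theorem stmt17_general {X : Type*} [PartialOrder X]
    (hc : Connected X) (f : X → ℝ) (x y : X) :
    gf f x y ≤ mf f x y := by
  rw [gf]
  linarith [sub_two_mul_mf_le_df f (hc x y)]

open ReebPoset in
/-- `m_f(x,y) ≥ g_f(x,y)` for all `x, y`. -/
theorem stmt17 {X : Type*} [PartialOrder X] [Fintype X]
    (hc : Connected X) (f : X → ℝ) (hm : Monotone f) (x y : X) :
    gf f x y ≤ mf f x y :=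
  stmt17_general hc f x y
end

section
/- Let (R, f) be a Reeb poset, π : R → T_f(R) the projection to its Reeb tree poset, d_f the Reeb metric on R and t_f the Reeb metric on T_f(R). Then for all x, x' in R: |d_f(x, x') − t_f(π(x), π(x'))| ≤ 2 · log₂(2 · M_F(R)) · hyp_f(R), where M_F(R) is the maximal length of a fence in R. -/
open scoped Classical

namespace ReebPoset

variable {X : Type*}

/-- Comparability of classes in the Reeb tree poset. -/
def qcmp [PartialOrder X] (f : X → ℝ) (a b : X) : Prop := treeLe f a b ∨ treeLe f b a

/-- A poset path in the Reeb tree poset `T_f(X)` from `[x]` to `[y]`, described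
by representatives. -/
structure QPath [PartialOrder X] (f : X → ℝ) (x y : X) where
  n : ℕ
  pts : Fin (n + 1) → X
  first : treeEq f (pts 0) x
  last : treeEq f (pts (Fin.last n)) y
  step : ∀ i : Fin n, qcmp f (pts i.castSucc) (pts i.succ)

/-- The `f`-length of a path in the Reeb tree poset. -/
noncomputable def qflen [PartialOrder X] (f : X → ℝ) {x y : X} (γ : QPath f x y) : ℝ :=
  ∑ i : Fin γ.n, |f (γ.pts i.succ) - f (γ.pts i.castSucc)|

/-- The Reeb metric `t_f` of the Reeb tree poset `T_f(X)`, evaluated on the images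
`π x`, `π y` of `x, y` under the projection `π : X → T_f(X)`. -/
noncomputable def tf [PartialOrder X] (f : X → ℝ) (x y : X) : ℝ :=
  sInf {L | ∃ γ : QPath f x y, L = qflen f γ}

end ReebPoset

namespace ReebPoset

variable {X : Type*} [PartialOrder X]

lemma Cmp.symm' {a b : X} (h : Cmp a b) : Cmp b a := h.elim Or.inr Or.inl

lemma cmp_refl (a : X) : Cmp a a := Or.inl le_rfl

/-! ### f-length of a list -/

noncomputable def lflen (f : X → ℝ) : List X → ℝ
  | [] => 0
  | [_] => 0
  | a :: b :: t => |f b - f a| + lflen f (b :: t)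

lemma lflen_nil (f : X → ℝ) : lflen f [] = 0 := rfl
lemma lflen_single (f : X → ℝ) (a : X) : lflen f [a] = 0 := rfl
lemma lflen_cons_cons (f : X → ℝ) (a b : X) (t : List X) :
    lflen f (a :: b :: t) = |f b - f a| + lflen f (b :: t) := rfl

lemma lflen_nonneg (f : X → ℝ) : ∀ l : List X, 0 ≤ lflen f l
  | [] => le_refl 0
  | [_] => le_refl 0
  | a :: b :: t => by
      rw [lflen_cons_cons]
      have := lflen_nonneg f (b :: t)
      positivity

lemma abs_sub_le_lflen (f : X → ℝ) : ∀ (l : List X) (u v : X),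
    l.head? = some u → l.getLast? = some v → |f u - f v| ≤ lflen f l
  | [], _, _ => by intro h _; simp at h
  | [a], u, v => by
      intro hu hv
      simp only [List.head?_cons, Option.some.injEq] at hu
      simp only [List.getLast?_singleton, Option.some.injEq] at hv
      subst hu; subst hv; simp [lflen_single]
  | a :: b :: t, u, v => by
      intro hu hv
      simp only [List.head?_cons, Option.some.injEq] at hu
      subst hu
      have hv' : (b :: t).getLast? = some v := by
        rw [List.getLast?_cons_cons] at hv; exact hv
      have ih := abs_sub_le_lflen f (b :: t) b v rfl hv'
      rw [lflen_cons_cons]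
      calc |f a - f v| ≤ |f a - f b| + |f b - f v| := abs_sub_le _ _ _
        _ ≤ |f b - f a| + lflen f (b :: t) := by rw [abs_sub_comm]; linarith

lemma lflen_append_cons (f : X → ℝ) :
    ∀ (l₁ : List X) (a : X) (l₂ : List X),
      lflen f (l₁ ++ a :: l₂) = lflen f (l₁ ++ [a]) + lflen f (a :: l₂)
  | [], a, l₂ => by simp [lflen_single]
  | [b], a, l₂ => by simp [lflen_cons_cons, lflen_single]
  | b :: c :: t, a, l₂ => by
      have ih := lflen_append_cons f (c :: t) a l₂
      simp only [List.cons_append, lflen_cons_cons] at *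
      rw [ih]; ring

lemma lflen_mem_bound (f : X → ℝ) (l : List X) (u v a : X)
    (hu : l.head? = some u) (hv : l.getLast? = some v) (ha : a ∈ l) :
    (f u - f a) + (f v - f a) ≤ lflen f l := by
  obtain ⟨s, t, rfl⟩ := List.append_of_mem ha
  rw [lflen_append_cons]
  have h1 : (s ++ [a]).head? = some u := by
    cases s with
    | nil => simpa using hu
    | cons b s' => simpa using hu
  have h2 : (s ++ [a]).getLast? = some a := by
    rw [List.getLast?_append]; simp
  have h3 : (a :: t).getLast? = some v := by
    rw [List.getLast?_append] at hv
    rcases h : (a :: t).getLast? with _ | w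
    · simp at h
    · rw [h] at hv; simpa using hv
  have b1 := abs_sub_le_lflen f (s ++ [a]) u a h1 h2
  have b2 := abs_sub_le_lflen f (a :: t) a v rfl h3
  have c1 : f u - f a ≤ |f u - f a| := le_abs_self _
  have c2 : f v - f a ≤ |f a - f v| := by rw [abs_sub_comm]; exact le_abs_self _
  linarith

lemma lflen_ofFn (f : X → ℝ) : ∀ (n : ℕ) (g : Fin (n + 1) → X),
    lflen f (List.ofFn g) = ∑ i : Fin n, |f (g i.succ) - f (g i.castSucc)|
  | 0, g => by simp [List.ofFn_succ, lflen_single]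
  | (n+1), g => by
      have ih := lflen_ofFn f n (g ∘ Fin.succ)
      have hof : List.ofFn (g ∘ Fin.succ) = g (Fin.succ 0) :: List.ofFn fun i => g i.succ.succ := by
        rw [List.ofFn_succ]; rfl
      rw [List.ofFn_succ, List.ofFn_succ, lflen_cons_cons, ← hof, ih, Fin.sum_univ_succ]
      simp [Function.comp_def, Fin.succ_castSucc, -Fin.castSucc_succ]


/-! ### Path from a list -/

lemma head?_eq_get (l : List X) (h : 0 < l.length) : l.head? = some (l.get ⟨0, h⟩) := by
  cases l with
  | nil => simp at h
  | cons a t => rfl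

lemma getLast?_eq_get (l : List X) (h : 0 < l.length) :
    l.getLast? = some (l.get ⟨l.length - 1, by omega⟩) := by
  have hne : l ≠ [] := List.length_pos_iff.mp h
  rw [List.getLast?_eq_getLast hne, List.getLast_eq_getElem]; rfl

/-- Build a `Path` from a nonempty `Cmp`-chain list. -/
noncomputable def ofLP {x y : X} (l : List X) (hne : l ≠ []) (hch : l.Chain' Cmp)
    (hh : l.head? = some x) (hl : l.getLast? = some y) : Path x y where
  n := l.length - 1
  pts i := l.get ⟨i.val, by have h1 := i.isLt; have h2 := List.length_pos_iff.mpr hne; omega⟩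
  first := by
    have h2 := List.length_pos_iff.mpr hne
    rw [head?_eq_get l h2] at hh
    exact (Option.some.injEq _ _ ▸ hh).symm ▸ rfl
  last := by
    have h2 := List.length_pos_iff.mpr hne
    rw [getLast?_eq_get l h2] at hl
    simpa [Fin.last] using (Option.some.injEq _ _ ▸ hl)
  step i := by
    have h2 := List.length_pos_iff.mpr hne
    have hi : (i : ℕ) < l.length - 1 := by have := i.isLt; omega
    have := List.isChain_iff_getElem.mp hch i (by omega)
    simpa [Fin.castSucc, Fin.succ, Fin.castAdd, Fin.castLE] using this

lemma ofLP_n {x y : X} (l : List X) (hne : l ≠ []) (hch : l.Chain' Cmp)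
    (hh : l.head? = some x) (hl : l.getLast? = some y) :
    (ofLP l hne hch hh hl).n = l.length - 1 := rfl

lemma ofLP_pts_mem {x y : X} (l : List X) (hne : l ≠ []) (hch : l.Chain' Cmp)
    (hh : l.head? = some x) (hl : l.getLast? = some y)
    (i : Fin ((ofLP l hne hch hh hl).n + 1)) : (ofLP l hne hch hh hl).pts i ∈ l :=
  List.get_mem _ _

/-! ### List from a path -/

lemma toList_ne_nil {x y : X} (γ : Path x y) : List.ofFn γ.pts ≠ [] := by
  simp [List.ofFn_succ]

lemma toList_chain {x y : X} (γ : Path x y) : (List.ofFn γ.pts).Chain' Cmp := by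
  rw [List.Chain', List.isChain_iff_getElem]
  intro i hi
  have hlen : (List.ofFn γ.pts).length = γ.n + 1 := List.length_ofFn
  rw [hlen] at hi
  simp only [List.getElem_ofFn]
  exact γ.step ⟨i, by omega⟩

lemma toList_head {x y : X} (γ : Path x y) : (List.ofFn γ.pts).head? = some x := by
  rw [List.ofFn_succ]
  simp [γ.first]

lemma toList_getLast {x y : X} (γ : Path x y) : (List.ofFn γ.pts).getLast? = some y := by
  have h2 : 0 < (List.ofFn γ.pts).length := by simp
  rw [getLast?_eq_get _ h2]
  simp only [List.get_ofFn, Option.some.injEq]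
  have : (Fin.cast (by simp) (⟨(List.ofFn γ.pts).length - 1, by omega⟩ : Fin (List.ofFn γ.pts).length)) = Fin.last γ.n := by
    apply Fin.ext; simp [Fin.last]
  rw [this, γ.last]

lemma toList_mem {x y : X} (γ : Path x y) {a : X} (ha : a ∈ List.ofFn γ.pts) :
    ∃ i, γ.pts i = a := by
  rw [List.mem_ofFn] at ha
  exact ha

lemma flen_eq_lflen {x y : X} (f : X → ℝ) (γ : Path x y) :
    flen f γ = lflen f (List.ofFn γ.pts) := by
  rw [lflen_ofFn]; rfl

/-! ### df and mf basics -/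

lemma flen_nonneg (f : X → ℝ) {x y : X} (γ : Path x y) : 0 ≤ flen f γ :=
  Finset.sum_nonneg fun _ _ => abs_nonneg _

lemma qflen_nonneg (f : X → ℝ) {x y : X} (γ : QPath f x y) : 0 ≤ qflen f γ :=
  Finset.sum_nonneg fun _ _ => abs_nonneg _

lemma df_le_flen (f : X → ℝ) {x y : X} (γ : Path x y) : df f x y ≤ flen f γ :=
  csInf_le ⟨0, fun _ ⟨δ, hδ⟩ => hδ ▸ flen_nonneg f δ⟩ ⟨γ, rfl⟩

lemma le_df (f : X → ℝ) {x y : X} (hc : Connected X) {C : ℝ}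
    (h : ∀ γ : Path x y, C ≤ flen f γ) : C ≤ df f x y := by
  obtain ⟨γ₀⟩ := hc x y
  have hs : {L | ∃ γ : Path x y, L = flen f γ}.Nonempty := ⟨flen f γ₀, γ₀, rfl⟩
  apply le_csInf hs
  rintro L ⟨γ, rfl⟩; exact h γ

/-- The path realizing `mf`, plus `mf` as an upper bound. -/
lemma mf_spec (f : X → ℝ) [Fintype X] (hc : Connected X) (x y : X) :
    (∃ γ : Path x y,
      mf f x y = Finset.univ.inf' Finset.univ_nonempty (fun i : Fin (γ.n + 1) => f (γ.pts i))) ∧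
    ∀ γ : Path x y,
      Finset.univ.inf' Finset.univ_nonempty (fun i : Fin (γ.n + 1) => f (γ.pts i)) ≤ mf f x y := by
  set S := {m | ∃ γ : Path x y,
    m = Finset.univ.inf' Finset.univ_nonempty (fun i : Fin (γ.n + 1) => f (γ.pts i))} with hS
  have hfin : S.Finite := by
    apply (Set.finite_range f).subset
    rintro m ⟨γ, rfl⟩
    obtain ⟨i, _, hi⟩ := Finset.exists_mem_eq_inf' (Finset.univ_nonempty)
      (fun i : Fin (γ.n + 1) => f (γ.pts i))
    exact ⟨γ.pts i, hi.symm⟩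
  have hne : S.Nonempty := ⟨_, (hc x y).some, rfl⟩
  constructor
  · exact hne.csSup_mem hfin
  · intro γ
    exact le_csSup hfin.bddAbove ⟨γ, rfl⟩


/-! ### tree relations -/

def Path.refl (a : X) : Path a a := ⟨0, fun _ => a, rfl, rfl, fun i => i.elim0⟩

lemma treeEq_refl (f : X → ℝ) (a : X) : treeEq f a a :=
  ⟨Path.refl a, fun _ => by simp [Path.refl]⟩

def Path.pair {a b : X} (h : Cmp a b) : Path a b where
  n := 1
  pts := ![a, b]
  first := rfl
  last := rfl
  step := fun i => by
    fin_cases i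
    simpa using h

lemma Path.pair_pts {a b : X} (h : Cmp a b) (i : Fin 2) :
    (Path.pair h).pts i = ![a, b] i := rfl

lemma treeLe_of_le (f : X → ℝ) (hf : StrictMono f) {a b : X} (h : a ≤ b) : treeLe f a b := by
  refine ⟨Path.pair (Or.inl h), fun i => ?_⟩
  fin_cases i
  · simp [Path.pair]
  · simpa [Path.pair] using hf.monotone h

lemma cmp_qcmp (f : X → ℝ) (hf : StrictMono f) {a b : X} (h : Cmp a b) : qcmp f a b :=
  h.elim (fun h' => Or.inl (treeLe_of_le f hf h')) (fun h' => Or.inr (treeLe_of_le f hf h'))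

lemma treeEq_f_eq (f : X → ℝ) {a b : X} (h : treeEq f a b) : f a = f b := by
  obtain ⟨γ, hγ⟩ := h
  have h0 := hγ 0
  have h1 := hγ (Fin.last γ.n)
  rw [γ.first] at h0
  rw [γ.last] at h1
  have := le_trans (le_max_right (f a) (f b)) h0
  have := le_trans (le_max_left (f a) (f b)) h1
  linarith

/-! ### Linked -/

def Linked (f : X → ℝ) (μ : ℝ) (a b : X) : Prop :=
  ∃ l : List X, l ≠ [] ∧ l.Chain' Cmp ∧ l.head? = some a ∧ l.getLast? = some b ∧
    ∀ c ∈ l, μ ≤ f c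

lemma Linked.symm {f : X → ℝ} {μ : ℝ} {a b : X} (h : Linked f μ a b) : Linked f μ b a := by
  obtain ⟨l, hne, hch, hh, hl, hb⟩ := h
  refine ⟨l.reverse, by simpa using hne, ?_, by rwa [List.head?_reverse],
    by rwa [List.getLast?_reverse], fun c hc => hb c (by simpa using hc)⟩
  rw [List.Chain', List.isChain_reverse]
  exact List.IsChain.imp (fun a b h => h.symm') hch

lemma Linked.trans {f : X → ℝ} {μ : ℝ} {a b c : X}
    (h1 : Linked f μ a b) (h2 : Linked f μ b c) : Linked f μ a c := by
  obtain ⟨l₁, hne1, hch1, hh1, hl1, hb1⟩ := h1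
  obtain ⟨l₂, hne2, hch2, hh2, hl2, hb2⟩ := h2
  cases l₂ with
  | nil => exact absurd rfl hne2
  | cons b' t =>
    simp only [List.head?_cons, Option.some.injEq] at hh2
    subst hh2
    cases t with
    | nil =>
      simp only [List.getLast?_singleton, Option.some.injEq] at hl2
      subst hl2
      exact ⟨l₁, hne1, hch1, hh1, hl1, hb1⟩
    | cons d t' =>
      refine ⟨l₁ ++ (d :: t'), by simp [hne1], ?_, ?_, ?_, ?_⟩
      · rw [List.Chain', List.isChain_append]
        refine ⟨hch1, hch2.tail, ?_⟩
        intro p hp q hq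
        rw [hl1] at hp
        simp only [Option.mem_def, Option.some.injEq, List.head?_cons] at hp hq
        subst hp; subst hq
        exact (List.isChain_cons_cons.mp hch2).1
      · rw [List.head?_append, hh1]; rfl
      · rw [List.getLast?_append]
        rw [List.getLast?_cons_cons] at hl2
        rw [hl2]; rfl
      · intro p hp
        rcases List.mem_append.mp hp with h | h
        · exact hb1 p h
        · exact hb2 p (List.mem_cons_of_mem _ h)

lemma path_linked {f : X → ℝ} {μ : ℝ} {a b : X} (γ : Path a b)
    (hb : ∀ i, μ ≤ f (γ.pts i)) : Linked f μ a b := by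
  refine ⟨List.ofFn γ.pts, toList_ne_nil γ, toList_chain γ, toList_head γ, toList_getLast γ,
    fun c hc => ?_⟩
  obtain ⟨i, rfl⟩ := toList_mem γ hc
  exact hb i

lemma treeLe_linked {f : X → ℝ} {μ : ℝ} {a b : X} (h : treeLe f a b) (hμ : μ ≤ f a) :
    Linked f μ a b := by
  obtain ⟨γ, hγ⟩ := h
  exact path_linked γ fun i => le_trans hμ (hγ i)

lemma treeEq_linked {f : X → ℝ} {μ : ℝ} {a b : X} (h : treeEq f a b) (hμ : μ ≤ f a) :
    Linked f μ a b := by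
  obtain ⟨γ, hγ⟩ := h
  exact path_linked γ fun i => le_trans hμ (le_trans (le_max_left _ _) (hγ i))

lemma qcmp_linked {f : X → ℝ} {μ : ℝ} {a b : X} (h : qcmp f a b)
    (ha : μ ≤ f a) (hb : μ ≤ f b) : Linked f μ a b := by
  rcases h with h | h
  · exact treeLe_linked h ha
  · exact (treeLe_linked h hb).symm

/-! ### QPath from Path and tf ≤ df -/

def QPath.ofPath (f : X → ℝ) (hf : StrictMono f) {x y : X} (γ : Path x y) : QPath f x y where
  n := γ.n
  pts := γ.pts
  first := by rw [γ.first]; exact treeEq_refl f _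
  last := by rw [γ.last]; exact treeEq_refl f _
  step := fun i => cmp_qcmp f hf (γ.step i)

lemma qflen_ofPath (f : X → ℝ) (hf : StrictMono f) {x y : X} (γ : Path x y) :
    qflen f (QPath.ofPath f hf γ) = flen f γ := rfl

lemma tf_le_df (f : X → ℝ) (hf : StrictMono f) (hc : Connected X) (x y : X) :
    tf f x y ≤ df f x y := by
  apply le_df f hc
  intro γ
  have : tf f x y ≤ qflen f (QPath.ofPath f hf γ) :=
    csInf_le ⟨0, fun _ ⟨δ, hδ⟩ => hδ ▸ qflen_nonneg f δ⟩ ⟨QPath.ofPath f hf γ, rfl⟩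
  rwa [qflen_ofPath] at this

/-! ### Gromov product bounds -/

lemma df_le_abs (f : X → ℝ) {a b : X} (h : Cmp a b) : df f a b ≤ |f b - f a| := by
  have hγ : flen f (Path.pair h) = |f b - f a| := by
    show ∑ i : Fin 1, |f ((Path.pair h).pts i.succ) - f ((Path.pair h).pts i.castSucc)| = _
    rw [Fin.sum_univ_one]
    have e1 : (Path.pair h).pts ((0 : Fin 1).succ) = b := rfl
    have e2 : (Path.pair h).pts ((0 : Fin 1).castSucc) = a := rfl
    rw [e1, e2]
  rw [← hγ]
  exact df_le_flen f _

lemma min_le_gf (f : X → ℝ) {a b : X} (h : Cmp a b) : min (f a) (f b) ≤ gf f a b := by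
  have hd := df_le_abs f h
  have e1 : max (f b) (f a) - min (f b) (f a) = |f b - f a| := by
    rw [abs_sub_comm]; exact max_sub_min_eq_abs _ _
  have e2 : min (f b) (f a) + max (f b) (f a) = f b + f a := min_add_max _ _
  have e3 : min (f a) (f b) = min (f b) (f a) := min_comm _ _
  rw [gf]
  linarith

/-! ### hyperbolicity constant -/

lemma hypf_spec (X : Type*) [PartialOrder X] [Fintype X] [Nonempty X] (f : X → ℝ) :
    0 ≤ hypf X f ∧ ∀ a b c : X, gf f a c ≥ min (gf f a b) (gf f b c) - hypf X f := by
  classical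
  set M : ℝ := Finset.univ.sup' Finset.univ_nonempty
    (fun t : X × X × X => min (gf f t.1 t.2.1) (gf f t.2.1 t.2.2) - gf f t.1 t.2.2) with hM
  have hset : {ε : ℝ | 0 ≤ ε ∧ ∀ x y z : X, gf f x z ≥ min (gf f x y) (gf f y z) - ε}
      = Set.Ici (max 0 M) := by
    ext ε
    simp only [Set.mem_setOf_eq, Set.mem_Ici, max_le_iff]
    constructor
    · rintro ⟨h0, h⟩
      refine ⟨h0, ?_⟩
      rw [hM, Finset.sup'_le_iff]
      rintro ⟨a, b, c⟩ -
      have := h a b c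
      simp only [ge_iff_le] at this
      linarith
    · rintro ⟨h0, h⟩
      refine ⟨h0, fun a b c => ?_⟩
      have : min (gf f a b) (gf f b c) - gf f a c ≤ M :=
        Finset.le_sup' (f := fun t : X × X × X =>
          min (gf f t.1 t.2.1) (gf f t.2.1 t.2.2) - gf f t.1 t.2.2) (Finset.mem_univ (a, b, c))
      simp only [ge_iff_le]
      linarith
  have : hypf X f = max 0 M := by rw [hypf, hset, csInf_Ici]
  rw [this]
  constructor
  · exact le_max_left _ _
  · intro a b c
    have : min (gf f a b) (gf f b c) - gf f a c ≤ M :=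
      Finset.le_sup' (f := fun t : X × X × X =>
        min (gf f t.1 t.2.1) (gf f t.2.1 t.2.2) - gf f t.1 t.2.2) (Finset.mem_univ (a, b, c))
    have := le_trans this (le_max_right 0 M)
    simp only [ge_iff_le]
    linarith

/-! ### iterated hyperbolicity -/

lemma gf_iterate (f : X → ℝ) {ε : ℝ} (hε : 0 ≤ ε)
    (h4 : ∀ a b c : X, gf f a c ≥ min (gf f a b) (gf f b c) - ε) (c : ℝ) :
    ∀ (N n : ℕ) (p : ℕ → X), 1 ≤ n → n ≤ 2 ^ N →
      (∀ i < n, c ≤ gf f (p i) (p (i + 1))) → c - N * ε ≤ gf f (p 0) (p n) := by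
  intro N
  induction N with
  | zero =>
    intro n p h1 h2 hedge
    have hn : n = 1 := le_antisymm (by simpa using h2) h1
    subst hn
    have := hedge 0 one_pos
    simpa using this
  | succ N ih =>
    intro n p h1 h2 hedge
    rcases eq_or_lt_of_le h1 with h | h
    · have hb := hedge 0 (by omega)
      have hss : (0:ℝ) ≤ (N + 1 : ℕ) * ε := by positivity
      subst h
      calc c - (N + 1 : ℕ) * ε ≤ c := by linarith
        _ ≤ gf f (p 0) (p 1) := hb
    · have h2n : 2 ≤ n := h
      have hm : n ≤ 2 * 2 ^ N := by rw [pow_succ] at h2; omega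
      set k := n / 2 with hk
      have hk1 : 1 ≤ k := by omega
      have hkN : k ≤ 2 ^ N := by omega
      have hnkN : n - k ≤ 2 ^ N := by omega
      have i1 := ih k p hk1 hkN (fun i hi => hedge i (by omega))
      have i2 := ih (n - k) (fun i => p (k + i)) (by omega) hnkN
        (fun i hi => hedge (k + i) (by omega))
      have hpn : k + (n - k) = n := by omega
      have i2' : c - (N:ℝ) * ε ≤ gf f (p k) (p n) := by simpa [hpn] using i2
      have hmain := h4 (p 0) (p k) (p n)
      have i1' : c - (N:ℝ) * ε ≤ gf f (p 0) (p k) := by simpa using i1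
      have hmin : c - (N:ℝ) * ε ≤ min (gf f (p 0) (p k)) (gf f (p k) (p n)) := le_min i1' i2'
      simp only [ge_iff_le] at hmain
      push_cast
      linarith


/-! ### generic ofFn head/last -/

lemma ofFn_head? {n : ℕ} (g : Fin (n + 1) → X) : (List.ofFn g).head? = some (g 0) := by
  rw [List.ofFn_succ]; rfl

lemma ofFn_getLast? {n : ℕ} (g : Fin (n + 1) → X) :
    (List.ofFn g).getLast? = some (g (Fin.last n)) := by
  have h2 : 0 < (List.ofFn g).length := by simp
  rw [getLast?_eq_get _ h2]
  simp only [List.get_ofFn, Option.some.injEq]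
  congr 1
  apply Fin.ext
  simp [Fin.last]

/-! ### tf lower bound -/

lemma tf_ge (f : X → ℝ) [Fintype X] (hf : StrictMono f) (hc : Connected X) (x y : X) :
    f x + f y - 2 * mf f x y ≤ tf f x y := by
  obtain ⟨γ₀⟩ := hc x y
  have hne : {L | ∃ γ : QPath f x y, L = qflen f γ}.Nonempty := ⟨_, QPath.ofPath f hf γ₀, rfl⟩
  apply le_csInf hne
  rintro L ⟨γ, rfl⟩
  set μ := Finset.univ.inf' Finset.univ_nonempty (fun i : Fin (γ.n + 1) => f (γ.pts i)) with hμ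
  have hμle : ∀ i, μ ≤ f (γ.pts i) := fun i => Finset.inf'_le _ (Finset.mem_univ i)
  have key : ∀ k : ℕ, ∀ hk : k ≤ γ.n, Linked f μ x (γ.pts ⟨k, Nat.lt_succ_of_le hk⟩) := by
    intro k
    induction k with
    | zero =>
      intro hk
      have e0 : (⟨0, Nat.lt_succ_of_le hk⟩ : Fin (γ.n + 1)) = 0 := by
        apply Fin.ext; simp
      rw [e0]
      exact (treeEq_linked γ.first (hμle 0)).symm
    | succ k ihk =>
      intro hk
      have ihk' := ihk (by omega)
      have hstep := γ.step ⟨k, by omega⟩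
      exact ihk'.trans (qcmp_linked hstep (hμle _) (hμle _))
  have hx' : Linked f μ x (γ.pts (Fin.last γ.n)) := key γ.n le_rfl
  have hxy : Linked f μ x y := hx'.trans (treeEq_linked γ.last (hμle _))
  obtain ⟨l, hne', hch, hh, hl', hb⟩ := hxy
  have hmf : μ ≤ mf f x y := by
    refine le_trans ?_ ((mf_spec f hc x y).2 (ofLP l hne' hch hh hl'))
    apply Finset.le_inf'
    intro i _
    exact hb _ (ofLP_pts_mem l hne' hch hh hl' i)
  obtain ⟨j, -, hj⟩ := Finset.exists_mem_eq_inf' Finset.univ_nonempty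
    (fun i : Fin (γ.n + 1) => f (γ.pts i))
  have hmem : γ.pts j ∈ List.ofFn γ.pts := by rw [List.mem_ofFn]; exact ⟨j, rfl⟩
  have hbd := lflen_mem_bound f (List.ofFn γ.pts) (γ.pts 0) (γ.pts (Fin.last γ.n)) (γ.pts j)
    (ofFn_head? γ.pts) (ofFn_getLast? γ.pts) hmem
  have e1 : f (γ.pts 0) = f x := treeEq_f_eq f γ.first
  have e2 : f (γ.pts (Fin.last γ.n)) = f y := treeEq_f_eq f γ.last
  have e3 : μ = f (γ.pts j) := hμ.trans hj
  rw [e1, e2, ← e3] at hbd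
  have heq : qflen f γ = lflen f (List.ofFn γ.pts) := by rw [qflen, lflen_ofFn]
  rw [heq]
  linarith

/-! ### fences as lists -/

def FenceL (l : List X) : Prop :=
  (∀ (i j : ℕ) (hi : i < l.length) (hj : j < l.length), i < j →
    l.get ⟨i, hi⟩ ≠ l.get ⟨j, hj⟩) ∧
  (∀ (i j : ℕ) (hi : i < l.length) (hj : j < l.length), i + 2 ≤ j →
    ¬ Cmp (l.get ⟨i, hi⟩) (l.get ⟨j, hj⟩))

lemma getLast?_take {l : List X} {i : ℕ} (hi : i < l.length) :
    (l.take (i+1)).getLast? = some (l.get ⟨i, hi⟩) := by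
  have hlt : (l.take (i+1)).length = i + 1 := by rw [List.length_take]; omega
  have hpos : 0 < (l.take (i+1)).length := by omega
  rw [getLast?_eq_get _ hpos]
  congr 1
  have e : (⟨(l.take (i+1)).length - 1, by omega⟩ : Fin (l.take (i+1)).length)
      = ⟨i, by omega⟩ := by
    apply Fin.ext
    show (l.take (i+1)).length - 1 = i
    omega
  rw [e]
  simp

lemma splice (l : List X) (hch : l.Chain' Cmp) (i j : ℕ) (hi : i < l.length)
    (hj : j < l.length) (hij : i < j) (hcmp : Cmp (l.get ⟨i, hi⟩) (l.get ⟨j, hj⟩)) :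
    ∃ l' : List X, l'.length + (j - i) = l.length + 1 ∧ l'.Chain' Cmp ∧
      l'.head? = l.head? ∧ l'.getLast? = l.getLast? ∧ ∀ a ∈ l', a ∈ l := by
  have hlt : (l.take (i+1)).length = i + 1 := by
    rw [List.length_take]; omega
  have hld : (l.drop j).length = l.length - j := List.length_drop
  have hgl : (l.take (i+1)).getLast? = some (l.get ⟨i, hi⟩) := getLast?_take hi
  have hhd : (l.drop j).head? = some (l.get ⟨j, hj⟩) := by
    rw [List.head?_drop]; simp [List.getElem?_eq_getElem hj, List.get_eq_getElem]
  refine ⟨l.take (i+1) ++ l.drop j, ?_, ?_, ?_, ?_, ?_⟩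
  · rw [List.length_append, hlt, hld]; omega
  · rw [List.Chain', List.isChain_append]
    refine ⟨hch.take _, hch.drop _, ?_⟩
    intro p hp q hq
    rw [hgl] at hp
    rw [hhd] at hq
    simp only [Option.mem_def, Option.some.injEq] at hp hq
    subst hp; subst hq
    exact hcmp
  · rw [List.head?_append]
    have : (l.take (i+1)).head? = l.head? := by
      rw [List.head?_take]; simp
    rw [this]
    have hpos : 0 < l.length := by omega
    rw [head?_eq_get l hpos]
    rfl
  · rw [List.getLast?_append, List.getLast?_drop, if_neg (by omega : ¬ l.length ≤ j)]
    have hpos : 0 < l.length := by omega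
    rw [getLast?_eq_get l hpos]
    rfl
  · intro a ha
    rcases List.mem_append.mp ha with h | h
    · exact (List.take_sublist _ _).mem h
    · exact (List.drop_sublist _ _).mem h

lemma fence_reduce : ∀ (fuel : ℕ) (l : List X), l.length ≤ fuel → l.Chain' Cmp → l ≠ [] →
    ∃ l' : List X, l' ≠ [] ∧ l'.Chain' Cmp ∧ l'.head? = l.head? ∧ l'.getLast? = l.getLast? ∧
      (∀ a ∈ l', a ∈ l) ∧ FenceL l' := by
  intro fuel
  induction fuel with
  | zero =>
    intro l hlen _ hne
    have : l = [] := List.length_eq_zero_iff.mp (by omega)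
    exact absurd this hne
  | succ fuel ih =>
    intro l hlen hch hne
    by_cases hF : FenceL l
    · exact ⟨l, hne, hch, rfl, rfl, fun a ha => ha, hF⟩
    · have hviol : (∃ (i j : ℕ) (hi : i < l.length) (hj : j < l.length), i < j ∧
          l.get ⟨i, hi⟩ = l.get ⟨j, hj⟩) ∨
          (∃ (i j : ℕ) (hi : i < l.length) (hj : j < l.length), i + 2 ≤ j ∧
          Cmp (l.get ⟨i, hi⟩) (l.get ⟨j, hj⟩)) := by
        by_contra hcon
        push_neg at hcon
        exact hF ⟨fun i j hi hj hlt => hcon.1 i j hi hj hlt,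
          fun i j hi hj h2 => hcon.2 i j hi hj h2⟩
      have main : ∃ l' : List X, l'.length ≤ fuel ∧ l'.Chain' Cmp ∧ l'.head? = l.head? ∧
          l'.getLast? = l.getLast? ∧ ∀ a ∈ l', a ∈ l := by
        rcases hviol with ⟨i, j, hi, hj, hij, hdup⟩ | ⟨i, j, hi, hj, hij, hcmp⟩
        · by_cases hjlt : j < l.length - 1
          · have hcmp' : Cmp (l.get ⟨i, hi⟩) (l.get ⟨j+1, by omega⟩) := by
              rw [hdup]
              exact List.isChain_iff_getElem.mp hch j (by omega)
            obtain ⟨l', hl1, hl2, hl3, hl4, hl5⟩ :=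
              splice l hch i (j+1) hi (by omega) (by omega) hcmp'
            exact ⟨l', by omega, hl2, hl3, hl4, hl5⟩
          · -- j = l.length - 1 : truncate
            have hjl : j = l.length - 1 := by omega
            refine ⟨l.take (i+1), ?_, hch.take _, ?_, ?_, ?_⟩
            · rw [List.length_take]; omega
            · rw [List.head?_take]; simp
            · have e : (⟨j, hj⟩ : Fin l.length) = ⟨l.length - 1, by omega⟩ := by
                apply Fin.ext
                show j = l.length - 1
                omega
              rw [getLast?_take hi, hdup, e, getLast?_eq_get l (by omega)]
            · intro a ha; exact (List.take_sublist _ _).mem ha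
        · obtain ⟨l', hl1, hl2, hl3, hl4, hl5⟩ := splice l hch i j hi hj (by omega) hcmp
          exact ⟨l', by omega, hl2, hl3, hl4, hl5⟩
      obtain ⟨l', h1, h2, h3, h4, h5⟩ := main
      have hne' : l' ≠ [] := by
        intro hnil
        rw [hnil] at h3
        rw [List.head?_eq_head hne] at h3
        simp at h3
      obtain ⟨l'', g1, g2, g3, g4, g5, g6⟩ := ih l' h1 h2 hne'
      exact ⟨l'', g1, g2, g3.trans h3, g4.trans h4, fun a ha => h5 a (g5 a ha), g6⟩

/-! ### good fence existence -/

lemma exists_good_fence (f : X → ℝ) [Fintype X] (hc : Connected X) (x y : X) :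
    ∃ δ : Path x y, IsFence δ ∧ ∀ i, mf f x y ≤ f (δ.pts i) := by
  obtain ⟨⟨γ, hγ⟩, -⟩ := mf_spec f hc x y
  have hbound : ∀ i, mf f x y ≤ f (γ.pts i) := by
    intro i; rw [hγ]; exact Finset.inf'_le _ (Finset.mem_univ i)
  obtain ⟨l', hne', hch', hh', hl', hmem', hF⟩ :=
    fence_reduce (List.ofFn γ.pts).length (List.ofFn γ.pts) le_rfl (toList_chain γ)
      (toList_ne_nil γ)
  rw [toList_head γ] at hh'
  rw [toList_getLast γ] at hl'
  refine ⟨ofLP l' hne' hch' hh' hl', ⟨?_, ?_⟩, ?_⟩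
  · intro a b hab
    by_contra hne2
    have hval : (a : ℕ) ≠ (b : ℕ) := fun h => hne2 (Fin.ext h)
    rcases Nat.lt_or_ge (a : ℕ) (b : ℕ) with h | h
    · exact hF.1 a b (lt_of_lt_of_le a.isLt
          (by rw [ofLP_n]; have := List.length_pos_iff.mpr hne'; omega))
        (lt_of_lt_of_le b.isLt
          (by rw [ofLP_n]; have := List.length_pos_iff.mpr hne'; omega)) h hab
    · have h' : (b : ℕ) < (a : ℕ) := by omega
      exact hF.1 b a (lt_of_lt_of_le b.isLt
          (by rw [ofLP_n]; have := List.length_pos_iff.mpr hne'; omega))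
        (lt_of_lt_of_le a.isLt
          (by rw [ofLP_n]; have := List.length_pos_iff.mpr hne'; omega)) h' hab.symm
  · intro i j hij
    exact hF.2 i j (lt_of_lt_of_le i.isLt
        (by rw [ofLP_n]; have := List.length_pos_iff.mpr hne'; omega))
      (lt_of_lt_of_le j.isLt
        (by rw [ofLP_n]; have := List.length_pos_iff.mpr hne'; omega)) hij
  · intro i
    obtain ⟨k, hk⟩ := toList_mem γ (hmem' _ (ofLP_pts_mem l' hne' hch' hh' hl' i))
    rw [← hk]
    exact hbound k

lemma fence_n_le_MF [Fintype X] {x y : X} (δ : Path x y) (hδ : IsFence δ) : δ.n ≤ MF X := by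
  apply le_csSup
  · refine ⟨Fintype.card X, ?_⟩
    rintro n ⟨x', y', γ, hγ, rfl⟩
    have hcard := Fintype.card_le_of_injective γ.pts hγ.1
    simp only [Fintype.card_fin] at hcard
    omega
  · exact ⟨x, y, δ, hδ, rfl⟩

end ReebPoset

open ReebPoset in
/-- `|d_f(x,x') - t_f(π x, π x')| ≤ 2 log₂(2 M_F(R)) hyp_f(R)`. -/
theorem stmt19 {R : Type*} [PartialOrder R] [Fintype R]
    (hc : Connected R) (f : R → ℝ) (hf : StrictMono f) (x x' : R) :
    |df f x x' - tf f x x'| ≤ 2 * Real.logb 2 (2 * (MF R : ℝ)) * hypf R f := by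
  haveI : Nonempty R := ⟨x⟩
  obtain ⟨hyp0, hyp4⟩ := hypf_spec R f
  have hRHS0 : 0 ≤ 2 * Real.logb 2 (2 * (MF R : ℝ)) * hypf R f := by
    rcases Nat.eq_zero_or_pos (MF R) with h | h
    · simp [h, Real.logb]
    · have h1 : (1:ℝ) ≤ 2 * (MF R : ℝ) := by
        have : (1:ℝ) ≤ (MF R : ℝ) := by exact_mod_cast h
        linarith
      have := Real.logb_nonneg one_lt_two h1
      positivity
  by_cases hxx : x = x'
  · subst hxx
    have hflen0 : flen f (ReebPoset.Path.refl x) = 0 := by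
      rw [flen]
      exact Finset.sum_eq_zero fun i _ => Fin.elim0 i
    have hdf0 : df f x x = 0 := by
      refine le_antisymm ?_ (le_df f hc fun γ => flen_nonneg f γ)
      rw [← hflen0]; exact df_le_flen f _
    have htf0 : tf f x x = 0 := by
      refine le_antisymm ?_ ?_
      · have h1 : tf f x x ≤ qflen f (QPath.ofPath f hf (ReebPoset.Path.refl x)) :=
          csInf_le ⟨0, fun _ ⟨δ, hδ⟩ => hδ ▸ qflen_nonneg f δ⟩ ⟨_, rfl⟩
        rwa [qflen_ofPath, hflen0] at h1
      · have hne : {L | ∃ γ : QPath f x x, L = qflen f γ}.Nonempty :=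
          ⟨_, QPath.ofPath f hf (ReebPoset.Path.refl x), rfl⟩
        apply le_csInf hne
        rintro L ⟨δ, rfl⟩
        exact qflen_nonneg f δ
    rw [hdf0, htf0]
    simpa using hRHS0
  · -- main case
    have htfdf := tf_le_df f hf hc x x'
    obtain ⟨δ, hδF, hδb⟩ := exists_good_fence f hc x x'
    have hn1 : 1 ≤ δ.n := by
      by_contra hcon
      push_neg at hcon
      have hn0 : δ.n = 0 := by omega
      have e : Fin.last δ.n = 0 := by apply Fin.ext; simp [hn0]
      have h1 := δ.first
      have h2 := δ.last
      rw [e] at h2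
      exact hxx (h1.symm.trans h2)
    have hnMF : δ.n ≤ MF R := fence_n_le_MF δ hδF
    set m := mf f x x' with hm
    set ε := hypf R f with hε
    -- the chain of points
    set p : ℕ → R := fun i => δ.pts ⟨min i δ.n, by omega⟩ with hp
    have hpe : ∀ i, (hi : i ≤ δ.n) → p i = δ.pts ⟨i, by omega⟩ := by
      intro i hi
      simp only [hp]
      congr 1
      apply Fin.ext
      show min i δ.n = i
      omega
    have hedge : ∀ i < δ.n, m ≤ gf f (p i) (p (i + 1)) := by
      intro i hi
      rw [hpe i (by omega), hpe (i+1) (by omega)]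
      have hcmp : Cmp (δ.pts ⟨i, by omega⟩) (δ.pts ⟨i+1, by omega⟩) := δ.step ⟨i, hi⟩
      refine le_trans ?_ (min_le_gf f hcmp)
      exact le_min (hδb _) (hδb _)
    have hiter := gf_iterate f hyp0 hyp4 m (Nat.clog 2 δ.n) δ.n p hn1
      (Nat.le_pow_clog one_lt_two _) hedge
    have hp0 : p 0 = x := by
      rw [hpe 0 (by omega)]
      have e0 : (⟨0, by omega⟩ : Fin (δ.n + 1)) = 0 := by apply Fin.ext; simp
      rw [e0, δ.first]
    have hpn : p δ.n = x' := by
      rw [hpe δ.n le_rfl]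
      have e0 : (⟨δ.n, by omega⟩ : Fin (δ.n + 1)) = Fin.last δ.n := rfl
      rw [e0, δ.last]
    rw [hp0, hpn] at hiter
    -- hiter : m - clog * ε ≤ gf f x x'
    have htfge := tf_ge f hf hc x x'
    rw [← hm] at htfge
    have hdfeq : df f x x' = f x + f x' - 2 * gf f x x' := by rw [gf]; ring
    -- clog bound
    have hclog : (Nat.clog 2 δ.n : ℝ) ≤ Real.logb 2 (2 * (MF R : ℝ)) := by
      have hMF1 : 1 ≤ MF R := le_trans hn1 hnMF
      have hMFr : (1:ℝ) ≤ (MF R : ℝ) := by exact_mod_cast hMF1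
      rcases eq_or_lt_of_le hn1 with h1 | h1
      · rw [← h1, Nat.clog_one_right]
        push_cast
        exact Real.logb_nonneg one_lt_two (by linarith)
      · have hlt := Nat.pow_pred_clog_lt_self one_lt_two h1
        set c := Nat.clog 2 δ.n with hcdef
        have hc1 : 1 ≤ c := Nat.clog_pos one_lt_two h1
        have h2c : (2:ℕ) ^ c < 2 * δ.n := by
          have hlt' : 2 ^ (c - 1) < δ.n := by
            simpa [Nat.pred_eq_sub_one] using hlt
          have he : (2:ℕ) ^ c = 2 * 2 ^ (c - 1) := by
            rw [← pow_succ']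
            congr 1
            omega
          rw [he]
          omega
        have h2cr : ((2:ℝ)) ^ c < 2 * (δ.n : ℝ) := by exact_mod_cast h2c
        have hδpos : (0:ℝ) < 2 * (δ.n : ℝ) := by positivity
        calc (c:ℝ) = Real.logb 2 ((2:ℝ) ^ c) := by
              rw [Real.logb_pow, Real.logb_self_eq_one one_lt_two]; ring
          _ ≤ Real.logb 2 (2 * (δ.n : ℝ)) :=
              (Real.logb_le_logb one_lt_two (by positivity) hδpos).mpr (le_of_lt h2cr)
          _ ≤ Real.logb 2 (2 * (MF R : ℝ)) := by
              refine (Real.logb_le_logb one_lt_two hδpos (by linarith)).mpr ?_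
              have : (δ.n : ℝ) ≤ (MF R : ℝ) := by exact_mod_cast hnMF
              linarith
    -- finish
    rw [abs_of_nonneg (sub_nonneg.mpr htfdf)]
    have step1 : df f x x' - tf f x x' ≤ 2 * (m - gf f x x') := by
      rw [hdfeq]; linarith
    have step2 : m - gf f x x' ≤ (Nat.clog 2 δ.n : ℝ) * ε := by linarith
    have step3 : (Nat.clog 2 δ.n : ℝ) * ε ≤ Real.logb 2 (2 * (MF R : ℝ)) * ε :=
      mul_le_mul_of_nonneg_right hclog hyp0
    calc df f x x' - tf f x x' ≤ 2 * (m - gf f x x') := step1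
      _ ≤ 2 * ((Nat.clog 2 δ.n : ℝ) * ε) := by linarith
      _ ≤ 2 * (Real.logb 2 (2 * (MF R : ℝ)) * ε) := by linarith
      _ = 2 * Real.logb 2 (2 * (MF R : ℝ)) * ε := by ring
end
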